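/- arXiv:1509.03368 — 6 statements merged into one kernel-verified Lean document; each statement's English description precedes it below -/
import Mathlib

section
/- Let K be a compact subset of the open upper half-plane ℂ⁺. Suppose A is a 2×2 complex matrix whose entries a₁₁, a₁₂, a₂₁, a₂₂ all lie in K, and suppose the spectral radius of the entrywise absolute-value matrix |A| = (|a_{ij}|) is at most 1. Then there exists δ > 0, depending only on K, such that every eigenvalue λ of A satisfies |λ - 1| ≥ δ. -/
/-!
Write `a, b, c, d` for the entries of `A`. The Perron root `μ` of the nonnegative matrix `|A|` is
one of its eigenvalues, so `μ ≤ 1`; since `|a|, |d| ≤ μ` and `|b| |c| = (μ - |a|)(μ - |d|)`, this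
gives `|b| |c| ≤ (1 - |a|)(1 - |d|)`. An eigenvalue `λ` of `A` satisfies
`(λ - a)(λ - d) = b c`. On the other hand `|1 - z| + |z| > 1` off the real axis, so by compactness
there is `η > 0` with `|1 - z| ≥ 1 - |z| + η` on `K`. If `|λ - 1| < η`, then `|λ - a| > 1 - |a|`
and `|λ - d| > 1 - |d|`, whence `|b c| > (1 - |a|)(1 - |d|)`, a contradiction.
-/

open Complex Matrix

theorem Matrix.sub_mul_sub_eq_of_eigenvector_fin_two {R : Type*} [CommRing R] [IsDomain R]
    {A : Matrix (Fin 2) (Fin 2) R} {lam : R} (h : ∃ v : Fin 2 → R, v ≠ 0 ∧ A *ᵥ v = lam • v) :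
    (lam - A 0 0) * (lam - A 1 1) = A 0 1 * A 1 0 := by
  obtain ⟨v, hv0, hv⟩ := h
  have hdet : (scalar (Fin 2) lam - A).det = 0 :=
    exists_mulVec_eq_zero_iff.mp ⟨v, hv0, by ext; simp [sub_mulVec, hv]⟩
  rw [det_fin_two] at hdet
  simp only [sub_apply, scalar_apply, diagonal_apply_eq, diagonal_apply_ne, ne_eq, zero_ne_one,
    one_ne_zero, not_false_eq_true, zero_sub] at hdet
  linear_combination hdet

-- The larger root of `(x - B 0 0) * (x - B 1 1) = B 0 1 * B 1 0`.
noncomputable def perronRoot (B : Matrix (Fin 2) (Fin 2) ℝ) : ℝ :=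
  (B 0 0 + B 1 1 + √((B 0 0 - B 1 1) ^ 2 + 4 * (B 0 1 * B 1 0))) / 2

section perronRoot

variable {B : Matrix (Fin 2) (Fin 2) ℝ} (hB : 0 ≤ B 0 1 * B 1 0)
include hB

theorem perronRoot_sub_mul_sub :
    (perronRoot B - B 0 0) * (perronRoot B - B 1 1) = B 0 1 * B 1 0 := by
  have := Real.sq_sqrt (show 0 ≤ (B 0 0 - B 1 1) ^ 2 + 4 * (B 0 1 * B 1 0) by positivity)
  unfold perronRoot
  linear_combination this / 4

theorem le_perronRoot : B 0 0 ≤ perronRoot B ∧ B 1 1 ≤ perronRoot B := by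
  have h : |B 0 0 - B 1 1| ≤ √((B 0 0 - B 1 1) ^ 2 + 4 * (B 0 1 * B 1 0)) := by
    rw [← Real.sqrt_sq_eq_abs]
    exact Real.sqrt_le_sqrt (by linarith)
  obtain ⟨h₁, h₂⟩ := abs_le.mp h
  unfold perronRoot
  constructor <;> linarith

theorem mulVec_perronVector :
    B *ᵥ ![B 0 1, perronRoot B - B 0 0] = perronRoot B • ![B 0 1, perronRoot B - B 0 0] := by
  have := perronRoot_sub_mul_sub hB
  ext i
  fin_cases i <;>
    simp only [mulVec, dotProduct, Fin.sum_univ_two, Fin.zero_eta, Fin.mk_one, cons_val_zero,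
      cons_val_one, Pi.smul_apply, smul_eq_mul]
  · ring
  · linear_combination -this

theorem mul_le_of_perronRoot_le_one (h : perronRoot B ≤ 1) :
    B 0 1 * B 1 0 ≤ (1 - B 0 0) * (1 - B 1 1) := by
  obtain ⟨h₀, h₁⟩ := le_perronRoot hB
  rw [← perronRoot_sub_mul_sub hB]
  exact mul_le_mul (by linarith) (by linarith) (by linarith) (by linarith)

end perronRoot

theorem perronRoot_le_one {B : Matrix (Fin 2) (Fin 2) ℝ} (hB01 : 0 < B 0 1) (hB10 : 0 ≤ B 1 0)
    (hspec : ∀ μ : ℂ, (∃ v : Fin 2 → ℂ, v ≠ 0 ∧ (B.map ((↑) : ℝ → ℂ)) *ᵥ v = μ • v) → ‖μ‖ ≤ 1) :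
    perronRoot B ≤ 1 := by
  set v := ![B 0 1, perronRoot B - B 0 0]
  have hv : ((↑) ∘ v : Fin 2 → ℂ) ≠ 0 := fun h => by
    simpa [v, hB01.ne'] using congrFun h 0
  have heig : (B.map ((↑) : ℝ → ℂ)) *ᵥ ((↑) ∘ v) = (perronRoot B : ℂ) • ((↑) ∘ v) := by
    ext i
    have := congrArg (fun w => (w i : ℂ)) (mulVec_perronVector (mul_nonneg hB01.le hB10))
    simpa using (RingHom.map_mulVec ofRealHom B v i).symm.trans this
  have := hspec _ ⟨_, hv, heig⟩
  rw [norm_real, Real.norm_eq_abs] at this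
  exact (le_abs_self _).trans this

theorem one_lt_norm_one_sub_add_norm {z : ℂ} (hz : z.im ≠ 0) : 1 < ‖1 - z‖ + ‖z‖ :=
  calc 1 ≤ |1 - z.re| + |z.re| := by linarith [abs_sub_abs_le_abs_sub 1 z.re, abs_one (α := ℝ)]
    _ < ‖1 - z‖ + ‖z‖ := by
      have h1 : |(1 - z).re| < ‖1 - z‖ := abs_re_lt_norm.mpr (by simpa using hz)
      simp only [sub_re, one_re] at h1
      linarith [abs_re_le_norm z]

theorem IsCompact.exists_pos_forall_one_sub_norm_add_le {K : Set ℂ} (hK : IsCompact K)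
    (him : ∀ z ∈ K, z.im ≠ 0) : ∃ η > 0, ∀ z ∈ K, 1 - ‖z‖ + η ≤ ‖1 - z‖ := by
  obtain ⟨η, hη, h⟩ := hK.exists_forall_le' (f := fun z => ‖1 - z‖ + ‖z‖ - 1) (a := 0)
    (by fun_prop) (fun z hz => sub_pos.mpr (one_lt_norm_one_sub_add_norm (him z hz)))
  exact ⟨η, hη, fun z hz => by linarith [h z hz]⟩

theorem le_norm_sub_one_of_sub_mul_sub_eq {a b c d lam : ℂ} {η : ℝ}
    (hchar : (lam - a) * (lam - d) = b * c) (hbc : ‖b‖ * ‖c‖ ≤ (1 - ‖a‖) * (1 - ‖d‖))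
    (ha : ‖a‖ ≤ 1) (hd : ‖d‖ ≤ 1) (ha' : 1 - ‖a‖ + η ≤ ‖1 - a‖) (hd' : 1 - ‖d‖ + η ≤ ‖1 - d‖) :
    η ≤ ‖lam - 1‖ := by
  by_contra! h
  have h₁ : ‖1 - lam‖ = ‖lam - 1‖ := norm_sub_rev 1 lam
  have ha_lt : 1 - ‖a‖ < ‖lam - a‖ := by linarith [norm_sub_le_norm_sub_add_norm_sub 1 lam a]
  have hd_lt : 1 - ‖d‖ < ‖lam - d‖ := by linarith [norm_sub_le_norm_sub_add_norm_sub 1 lam d]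
  have := calc ‖b‖ * ‖c‖ ≤ (1 - ‖a‖) * (1 - ‖d‖) := hbc
    _ < ‖lam - a‖ * ‖lam - d‖ := mul_lt_mul'' ha_lt hd_lt (by linarith) (by linarith)
    _ = ‖b‖ * ‖c‖ := by rw [← norm_mul, hchar, norm_mul]
  exact this.false

/-- eigenvalues of a 2×2 matrix with entries in a compact subset `K` of the
open upper half-plane, whose entrywise absolute value matrix has spectral radius at most 1,
are uniformly (depending only on `K`) bounded away from 1. -/
theorem stmt_0 (K : Set ℂ) (hK : IsCompact K) (hKup : ∀ z ∈ K, 0 < z.im) :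
    ∃ δ : ℝ, 0 < δ ∧ ∀ A : Matrix (Fin 2) (Fin 2) ℂ,
      (∀ i j, A i j ∈ K) →
      (∀ μ : ℂ, (∃ v : Fin 2 → ℂ, v ≠ 0 ∧
          (A.map (fun a => ((‖a‖ : ℝ) : ℂ))).mulVec v = μ • v) → ‖μ‖ ≤ 1) →
      ∀ lam : ℂ, (∃ v : Fin 2 → ℂ, v ≠ 0 ∧ A.mulVec v = lam • v) → δ ≤ ‖lam - 1‖ := by
  obtain ⟨η, hη, hmargin⟩ :=
    hK.exists_pos_forall_one_sub_norm_add_le fun z hz => (hKup z hz).ne'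
  refine ⟨η, hη, fun A hA hspec lam hlam => ?_⟩
  have hA01 : A 0 1 ≠ 0 := fun h => by simpa [h] using hKup _ (hA 0 1)
  have hμ : perronRoot (A.map norm) ≤ 1 :=
    perronRoot_le_one (norm_pos_iff.mpr hA01) (norm_nonneg (A 1 0)) hspec
  have hB : 0 ≤ ‖A 0 1‖ * ‖A 1 0‖ := by positivity
  obtain ⟨ha, hd⟩ := le_perronRoot (B := A.map norm) hB
  exact le_norm_sub_one_of_sub_mul_sub_eq (sub_mul_sub_eq_of_eigenvector_fin_two hlam)
    (mul_le_of_perronRoot_le_one (B := A.map norm) hB hμ) (ha.trans hμ) (hd.trans hμ)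
    (hmargin _ (hA 0 0)) (hmargin _ (hA 1 1))
end

section
/- Let A be a 2×2 complex matrix with all entries in the open upper half-plane ℂ⁺ such that the spectral radius of the entrywise absolute-value matrix |A| is at most 1. If ξ ∈ ℂ² is a vector with Aξ = ξ, then ξ = 0. -/
/-!
Let `B = |A|`. Its entries are positive, so its larger eigenvalue `ρ` has a positive right
eigenvector and a positive left eigenvector `w`; the right one gives `ρ ≤ 1` by the spectral
hypothesis. If `Aξ = ξ`, the triangle inequality gives `|ξ| ≤ B|ξ|`, and pairing with `w` gives
`w ⬝ (B|ξ| - |ξ|) = (ρ - 1) (w ⬝ |ξ|) ≤ 0`, so `|ξ| = B|ξ|`. Equality in the triangle inequality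
for row `i` makes `Aᵢᵢ ξᵢ` a nonnegative multiple of `ξᵢ`, so `ξᵢ ≠ 0` would force `Aᵢᵢ ≥ 0`,
against `Im Aᵢᵢ > 0`.
-/

open Complex Matrix

open scoped ComplexOrder

section SameRay

variable {E ι : Type*} [NormedAddCommGroup E] [NormedSpace ℝ E] [StrictConvexSpace ℝ E]

theorem sameRay_sum_of_norm_sum_eq_sum_norm [DecidableEq ι] {s : Finset ι} {f : ι → E}
    (h : ‖∑ i ∈ s, f i‖ = ∑ i ∈ s, ‖f i‖) {k : ι} (hk : k ∈ s) :
    SameRay ℝ (f k) (∑ i ∈ s, f i) := by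
  rw [← Finset.add_sum_erase s f hk] at h ⊢
  rw [← Finset.add_sum_erase s (‖f ·‖) hk] at h
  have hadd : ‖f k + ∑ i ∈ s.erase k, f i‖ = ‖f k‖ + ‖∑ i ∈ s.erase k, f i‖ :=
    le_antisymm (norm_add_le _ _) (h ▸ add_le_add le_rfl (norm_sum_le _ _))
  exact (SameRay.refl (f k)).add_right (sameRay_iff_norm_add.mpr hadd)

end SameRay

theorem Complex.nonneg_of_sameRay_mul_self {a z : ℂ} (h : SameRay ℝ (a * z) z) (hz : z ≠ 0) :
    0 ≤ a := by
  obtain ⟨r, hr, hrz⟩ := h.symm.exists_nonneg_left hz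
  rw [real_smul] at hrz
  rw [← mul_right_cancel₀ hz hrz]
  exact_mod_cast hr

namespace Matrix

variable {n : Type*} [Fintype n]

theorem mulVec_eq_self_of_le_mulVec {B : Matrix n n ℝ} {w x : n → ℝ} {l : ℝ}
    (hw : ∀ i, 0 < w i) (hwB : w ᵥ* B = l • w) (hl : l ≤ 1) (hx : 0 ≤ x)
    (hle : x ≤ B *ᵥ x) : B *ᵥ x = x := by
  have hweighted : w ⬝ᵥ (B *ᵥ x - x) = (l - 1) * (w ⬝ᵥ x) := by
    rw [dotProduct_sub, dotProduct_mulVec, hwB, smul_dotProduct, smul_eq_mul]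
    ring
  have hterm : ∀ i ∈ Finset.univ, 0 ≤ w i * (B *ᵥ x - x) i := fun i _ =>
    mul_nonneg (hw i).le (sub_nonneg.mpr (hle i))
  have hzero : w ⬝ᵥ (B *ᵥ x - x) = 0 := by
    refine le_antisymm ?_ (Finset.sum_nonneg hterm)
    rw [hweighted]
    exact mul_nonpos_of_nonpos_of_nonneg (by linarith)
      (dotProduct_nonneg_of_nonneg (fun i => (hw i).le) hx)
  funext i
  have := (Finset.sum_eq_zero_iff_of_nonneg hterm).mp hzero i (Finset.mem_univ i)
  exact sub_eq_zero.mp ((mul_eq_zero.mp this).resolve_left (hw i).ne')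

theorem norm_le_map_norm_mulVec_of_mulVec_eq_self {A : Matrix n n ℂ} {ξ : n → ℂ}
    (hξ : A *ᵥ ξ = ξ) : (‖ξ ·‖) ≤ A.map norm *ᵥ (‖ξ ·‖) := fun i => by
  conv_lhs => rw [← hξ]
  simpa only [mulVec, dotProduct, map_apply, norm_mul] using
    norm_sum_le Finset.univ fun j => A i j * ξ j

theorem diag_nonneg_of_norm_eq_map_norm_mulVec [DecidableEq n] {A : Matrix n n ℂ} {ξ : n → ℂ}
    (hξ : A *ᵥ ξ = ξ) {i : n} (hi : ξ i ≠ 0)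
    (heq : ‖ξ i‖ = (A.map norm *ᵥ (‖ξ ·‖)) i) : 0 ≤ A i i := by
  have hrow : ∑ j, A i j * ξ j = ξ i := congrFun hξ i
  have hnorm : ‖∑ j, A i j * ξ j‖ = ∑ j, ‖A i j * ξ j‖ := by
    simpa only [hrow, mulVec, dotProduct, map_apply, norm_mul] using heq
  have hray := sameRay_sum_of_norm_sum_eq_sum_norm hnorm (Finset.mem_univ i)
  exact nonneg_of_sameRay_mul_self (hrow ▸ hray) hi

theorem eq_zero_of_mulVec_eq_self {A : Matrix n n ℂ} (hA : ∀ i, 0 < (A i i).im)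
    {w : n → ℝ} {l : ℝ} (hw : ∀ i, 0 < w i) (hwA : w ᵥ* A.map norm = l • w) (hl : l ≤ 1)
    {ξ : n → ℂ} (hξ : A *ᵥ ξ = ξ) : ξ = 0 := by
  classical
  have hle := norm_le_map_norm_mulVec_of_mulVec_eq_self hξ
  have heq := mulVec_eq_self_of_le_mulVec hw hwA hl (fun i => norm_nonneg (ξ i)) hle
  funext i
  by_contra hi
  have := diag_nonneg_of_norm_eq_map_norm_mulVec hξ hi (congrFun heq i).symm
  exact (hA i).ne' (Complex.nonneg_iff.mp this).2.symm

variable (B : Matrix (Fin 2) (Fin 2) ℝ)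

/-- The larger root of the characteristic polynomial `t² - tr B • t + det B`. -/
noncomputable def perronRoot : ℝ :=
  (B 0 0 + B 1 1 + √((B 0 0 - B 1 1) ^ 2 + 4 * (B 0 1 * B 1 0))) / 2

variable {B}

theorem perronRoot_mul_self (hB : 0 ≤ B 0 1 * B 1 0) :
    B.perronRoot * B.perronRoot =
      (B 0 0 + B 1 1) * B.perronRoot - (B 0 0 * B 1 1 - B 0 1 * B 1 0) := by
  have hsq := Real.sq_sqrt (add_nonneg (sq_nonneg (B 0 0 - B 1 1)) (mul_nonneg zero_le_four hB))
  rw [perronRoot]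
  linear_combination hsq / 4

theorem lt_perronRoot (hB : 0 < B 0 1 * B 1 0) : B 0 0 < B.perronRoot := by
  have hlt : B 0 0 - B 1 1 < √((B 0 0 - B 1 1) ^ 2 + 4 * (B 0 1 * B 1 0)) :=
    (le_abs_self _).trans_lt (Real.lt_sqrt (abs_nonneg _) |>.mpr (by rw [sq_abs]; linarith))
  rw [perronRoot]
  linarith

theorem mulVec_perronRoot (hB : 0 ≤ B 0 1 * B 1 0) :
    B *ᵥ ![B 0 1, B.perronRoot - B 0 0] = B.perronRoot • ![B 0 1, B.perronRoot - B 0 0] := by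
  have h := perronRoot_mul_self hB
  rw [mulVec_fin_two, smul_vec2]
  refine vec2_eq ?_ ?_ <;> simp only [cons_val_zero, cons_val_one, smul_eq_mul]
  · ring
  · linear_combination -h

theorem vecMul_perronRoot (hB : 0 ≤ B 0 1 * B 1 0) :
    ![B 1 0, B.perronRoot - B 0 0] ᵥ* B = B.perronRoot • ![B 1 0, B.perronRoot - B 0 0] := by
  have h := perronRoot_mul_self hB
  rw [← mulVec_transpose, mulVec_fin_two, smul_vec2]
  refine vec2_eq ?_ ?_ <;> simp only [transpose_apply, cons_val_zero, cons_val_one, smul_eq_mul]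
  · ring
  · linear_combination -h

end Matrix

/-- if a 2×2 matrix has all entries in the open upper half-plane and the
entrywise absolute value matrix has spectral radius at most 1, then the only fixed vector
of `A` is zero. -/
theorem stmt_1 (A : Matrix (Fin 2) (Fin 2) ℂ)
    (hA : ∀ i j, 0 < (A i j).im)
    (hρ : ∀ μ : ℂ, (∃ v : Fin 2 → ℂ, v ≠ 0 ∧
        (A.map (fun a => ((‖a‖ : ℝ) : ℂ))).mulVec v = μ • v) → ‖μ‖ ≤ 1)
    (ξ : Fin 2 → ℂ) (hξ : A.mulVec ξ = ξ) : ξ = 0 := by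
  set B := A.map norm
  have hB : ∀ i j, 0 < B i j := fun i j => norm_pos_iff.mpr (ne_of_apply_ne im (hA i j).ne')
  have hB01 : 0 < B 0 1 * B 1 0 := mul_pos (hB 0 1) (hB 1 0)
  have hroot : B.perronRoot ≤ 1 := by
    set v := ![B 0 1, B.perronRoot - B 0 0]
    have hv : ofRealHom ∘ v ≠ 0 := fun h => (hB 0 1).ne' (by simpa [v] using congrFun h 0)
    have hBv : A.map (fun a => ((‖a‖ : ℝ) : ℂ)) *ᵥ (ofRealHom ∘ v) =
        (B.perronRoot : ℂ) • (ofRealHom ∘ v) := by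
      have hmap : A.map (fun a => ((‖a‖ : ℝ) : ℂ)) = B.map ofRealHom := rfl
      ext i
      rw [hmap, ← RingHom.map_mulVec, mulVec_perronRoot hB01.le]
      simp [v]
    exact (le_abs_self _).trans (by simpa using hρ _ ⟨_, hv, hBv⟩)
  have hw : ∀ i, 0 < ![B 1 0, B.perronRoot - B 0 0] i := by
    intro i
    fin_cases i
    exacts [hB 1 0, sub_pos.mpr (lt_perronRoot hB01)]
  exact eq_zero_of_mulVec_eq_self (fun i => hA i i) hw (vecMul_perronRoot hB01.le) hroot hξ
end

section
/- Fix z ∈ ℂ⁺, N ∈ ℕ with N ≥ 1, and real sequences α_k, β_k ≥ 1 for k = 1,…,N. Then there is at most one pair (u,v) ∈ ℂ⁺ × ℂ⁺ satisfying u = -(1/N) Σ_k α_k/(z + α_k u + β_k v) and v = -(1/N) Σ_k β_k/(z + α_k u + β_k v). -/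
/-!
Write `d_k = z + α_k u + β_k v` and `c = (α, β)`. Taking imaginary parts,
`Im u = (1/N) ∑ α_k Im d_k / |d_k|²` with `Im d_k > α_k Im u + β_k Im v`, so the nonnegative
matrix `T = (1/N) ∑_k |d_k|⁻² (c_ik c_jk)_ij` satisfies `T x < x` for `x = (Im u, Im v)`,
and likewise `T' x' < x'` for a second solution. Subtracting the equations gives `δ ≤ M δ`
for `δ = (|u - u'|, |v - v'|)` and the mixed matrix
`M = (1/N) ∑_k (|d_k| |d'_k|)⁻¹ (c_ik c_jk)_ij`, while Cauchy–Schwarz gives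
`M g ≤ √(T x · T' x') < g` for `g = √(x x')`. If `δ ≠ 0`, take the least `r > 0` with
`δ ≤ r g`; then `δ ≤ r M g < r g` in every component, contradicting minimality.
Nothing here depends on having two unknowns, so the argument is run for unknowns `w_i`,
`i ∈ ι`, coupled through positive weights `c_ik`.
-/

open Complex Finset

namespace SelfConsistent

variable {ι κ : Type*} [Fintype ι]

lemma eq_zero_of_le_mul_imp_lt {δ g : ι → ℝ} (hδ : ∀ i, 0 ≤ δ i) (hg : ∀ i, 0 < g i)
    (H : ∀ r, 0 < r → (∀ j, δ j ≤ r * g j) → ∀ i, δ i < r * g i) : δ = 0 := by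
  by_contra hne
  obtain ⟨i, hi⟩ := Function.ne_iff.mp hne
  obtain ⟨m, -, hm⟩ := exists_max_image univ (fun j => δ j / g j) ⟨i, mem_univ i⟩
  have hr : 0 < δ m / g m :=
    (div_pos ((hδ i).lt_of_ne' hi) (hg i)).trans_le (hm i (mem_univ i))
  have hle : ∀ j, δ j ≤ δ m / g m * g j :=
    fun j => (div_le_iff₀ (hg j)).mp (hm j (mem_univ j))
  exact (H _ hr hle m).ne (div_mul_cancel₀ _ (hg m).ne').symm

def denom (c : ι → κ → ℝ) (z : ℂ) (w : ι → ℂ) (k : κ) : ℂ :=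
  z + ∑ j, (c j k : ℂ) * w j

section denom

variable {c : ι → κ → ℝ} {z : ℂ} {w w' : ι → ℂ}

lemma im_denom (k : κ) : (denom c z w k).im = z.im + ∑ j, c j k * (w j).im := by
  simp [denom, im_sum]

lemma im_denom_pos (hz : 0 < z.im) (hc : ∀ i k, 0 ≤ c i k) (hw : ∀ j, 0 ≤ (w j).im) (k : κ) :
    0 < (denom c z w k).im := by
  rw [im_denom]
  exact add_pos_of_pos_of_nonneg hz (sum_nonneg fun j _ => mul_nonneg (hc j k) (hw j))

lemma denom_ne_zero (hz : 0 < z.im) (hc : ∀ i k, 0 ≤ c i k) (hw : ∀ j, 0 ≤ (w j).im)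
    (k : κ) : denom c z w k ≠ 0 :=
  fun h => (im_denom_pos hz hc hw k).ne' (by rw [h, zero_im])

lemma denom_sub_denom (k : κ) :
    denom c z w k - denom c z w' k = ∑ j, (c j k : ℂ) * (w j - w' j) := by
  simp only [denom, mul_sub, sum_sub_distrib]
  ring

end denom

variable [Fintype κ]

noncomputable def kernelOp (c : ι → κ → ℝ) (D D' : κ → ℝ) (x : ι → ℝ) (i : ι) : ℝ :=
  ∑ k, c i k * (∑ j, c j k * x j) / (D k * D' k)

section kernelOp

variable {c : ι → κ → ℝ} {D D' : κ → ℝ}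

lemma kernelOp_mono (hc : ∀ i k, 0 ≤ c i k) (hD : ∀ k, 0 ≤ D k) (hD' : ∀ k, 0 ≤ D' k)
    {x y : ι → ℝ} (hxy : ∀ j, x j ≤ y j) (i : ι) :
    kernelOp c D D' x i ≤ kernelOp c D D' y i := by
  unfold kernelOp
  gcongr with k _ j _
  · exact mul_nonneg (hD k) (hD' k)
  · exact hc i k
  · exact hc j k
  · exact hxy j

lemma kernelOp_nonneg (hc : ∀ i k, 0 ≤ c i k) (hD : ∀ k, 0 ≤ D k) (hD' : ∀ k, 0 ≤ D' k)
    {x : ι → ℝ} (hx : ∀ j, 0 ≤ x j) (i : ι) : 0 ≤ kernelOp c D D' x i :=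
  sum_nonneg fun k _ => div_nonneg (mul_nonneg (hc i k) (sum_nonneg fun j _ =>
    mul_nonneg (hc j k) (hx j))) (mul_nonneg (hD k) (hD' k))

lemma kernelOp_const_mul (r : ℝ) (x : ι → ℝ) (i : ι) :
    kernelOp c D D' (fun j => r * x j) i = r * kernelOp c D D' x i := by
  simp only [kernelOp, mul_sum, sum_div]
  exact sum_congr rfl fun k _ => sum_congr rfl fun j _ => by ring

lemma kernelOp_eq_sum_prod (E E' : κ → ℝ) (y : ι → ℝ) (i : ι) :
    kernelOp c E E' y i = ∑ p : κ × ι, c i p.1 * c p.2 p.1 * y p.2 / (E p.1 * E' p.1) := by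
  simp only [kernelOp, Fintype.sum_prod_type, mul_sum, sum_div, mul_assoc]

/-- Cauchy–Schwarz over the pairs `(k, j)`. -/
lemma kernelOp_sqrt_mul_sqrt_le (hc : ∀ i k, 0 ≤ c i k) {x x' : ι → ℝ} (hx : ∀ j, 0 ≤ x j)
    (hx' : ∀ j, 0 ≤ x' j) (i : ι) :
    kernelOp c D D' (fun j => √(x j) * √(x' j)) i
      ≤ √(kernelOp c D D x i) * √(kernelOp c D' D' x' i) := by
  set a : κ × ι → ℝ := fun p => √(c i p.1 * c p.2 p.1) * √(x p.2) / D p.1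
  set b : κ × ι → ℝ := fun p => √(c i p.1 * c p.2 p.1) * √(x' p.2) / D' p.1
  have hcc : ∀ p : κ × ι, √(c i p.1 * c p.2 p.1) ^ 2 = c i p.1 * c p.2 p.1 :=
    fun p => Real.sq_sqrt (mul_nonneg (hc _ _) (hc _ _))
  calc kernelOp c D D' (fun j => √(x j) * √(x' j)) i = ∑ p, a p * b p := by
        rw [kernelOp_eq_sum_prod]
        refine sum_congr rfl fun p _ => ?_
        rw [show a p * b p = √(c i p.1 * c p.2 p.1) ^ 2 * (√(x p.2) * √(x' p.2))
            / (D p.1 * D' p.1) by simp only [a, b]; ring, hcc]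
    _ ≤ √(∑ p, a p ^ 2) * √(∑ p, b p ^ 2) := Real.sum_mul_le_sqrt_mul_sqrt _ _ _
    _ = √(kernelOp c D D x i) * √(kernelOp c D' D' x' i) := by
        rw [kernelOp_eq_sum_prod, kernelOp_eq_sum_prod]
        congr 2 <;> refine sum_congr rfl fun p _ => ?_
        · simp only [a, div_pow, mul_pow, hcc, Real.sq_sqrt (hx _)]
          ring
        · simp only [b, div_pow, mul_pow, hcc, Real.sq_sqrt (hx' _)]
          ring

end kernelOp

def IsSelfConsistent (c : ι → κ → ℝ) (t : ℝ) (z : ℂ) (w : ι → ℂ) : Prop :=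
  ∀ i, w i = -(t : ℂ) * ∑ k, (c i k : ℂ) / denom c z w k

variable {c : ι → κ → ℝ} {t : ℝ} {z : ℂ} {w w' : ι → ℂ}

namespace IsSelfConsistent

lemma im_eq (h : IsSelfConsistent c t z w) (i : ι) :
    (w i).im = t * ∑ k, c i k * (denom c z w k).im / (‖denom c z w k‖ * ‖denom c z w k‖) := by
  conv_lhs => rw [h i]
  rw [← ofReal_neg, im_ofReal_mul, im_sum, neg_mul, ← mul_neg, ← sum_neg_distrib]
  congr 1
  refine sum_congr rfl fun k _ => ?_
  simp only [div_im, ofReal_im, ofReal_re, zero_mul, zero_div, zero_sub, normSq_eq_norm_sq]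
  ring

lemma kernelOp_im_lt (hz : 0 < z.im) (hc : ∀ i k, 0 < c i k) (ht : 0 < t) [Nonempty κ]
    (hw : ∀ j, 0 < (w j).im) (h : IsSelfConsistent c t z w) (i : ι) :
    t * kernelOp c (‖denom c z w ·‖) (‖denom c z w ·‖) (fun j => (w j).im) i < (w i).im := by
  have hd := denom_ne_zero hz (fun i k => (hc i k).le) (fun j => (hw j).le)
  have split : ∑ k, c i k * (denom c z w k).im / (‖denom c z w k‖ * ‖denom c z w k‖)
      = ∑ k, c i k * z.im / (‖denom c z w k‖ * ‖denom c z w k‖)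
        + kernelOp c (‖denom c z w ·‖) (‖denom c z w ·‖) (fun j => (w j).im) i := by
    simp only [kernelOp, im_denom, mul_add, add_div, sum_add_distrib]
  have hpos : 0 < ∑ k, c i k * z.im / (‖denom c z w k‖ * ‖denom c z w k‖) :=
    sum_pos (fun k _ => by have := norm_pos_iff.mpr (hd k); have := hc i k; positivity)
      univ_nonempty
  rw [h.im_eq i, split]
  linarith [mul_pos ht hpos]

lemma sub_eq (h : IsSelfConsistent c t z w) (h' : IsSelfConsistent c t z w')
    (hd : ∀ k, denom c z w k ≠ 0) (hd' : ∀ k, denom c z w' k ≠ 0) (i : ι) :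
    w i - w' i = t * ∑ k, c i k * (denom c z w k - denom c z w' k)
      / (denom c z w k * denom c z w' k) := by
  rw [h i, h' i, ← mul_sub, ← sum_sub_distrib, neg_mul, ← mul_neg, ← sum_neg_distrib]
  congr 1
  refine sum_congr rfl fun k _ => ?_
  field_simp [hd k, hd' k]
  ring

lemma norm_sub_le (hc : ∀ i k, 0 ≤ c i k) (ht : 0 ≤ t) (h : IsSelfConsistent c t z w)
    (h' : IsSelfConsistent c t z w') (hd : ∀ k, denom c z w k ≠ 0)
    (hd' : ∀ k, denom c z w' k ≠ 0) (i : ι) :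
    ‖w i - w' i‖ ≤ t * kernelOp c (‖denom c z w ·‖) (‖denom c z w' ·‖)
      (fun j => ‖w j - w' j‖) i := by
  rw [h.sub_eq h' hd hd' i, norm_mul, Complex.norm_of_nonneg ht, kernelOp]
  gcongr
  refine (norm_sum_le _ _).trans (sum_le_sum fun k _ => ?_)
  rw [norm_div, norm_mul, norm_mul, Complex.norm_of_nonneg (hc i k), denom_sub_denom]
  gcongr
  · exact hc i k
  refine (norm_sum_le _ _).trans_eq (sum_congr rfl fun j _ => ?_)
  rw [norm_mul, Complex.norm_of_nonneg (hc j k)]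

lemma kernelOp_sqrt_im_lt (hz : 0 < z.im) (hc : ∀ i k, 0 < c i k) (ht : 0 < t) [Nonempty κ]
    (hw : ∀ j, 0 < (w j).im) (hw' : ∀ j, 0 < (w' j).im)
    (h : IsSelfConsistent c t z w) (h' : IsSelfConsistent c t z w') (i : ι) :
    t * kernelOp c (‖denom c z w ·‖) (‖denom c z w' ·‖) (fun j => √(w j).im * √(w' j).im) i
      < √(w i).im * √(w' i).im := by
  have hc0 : ∀ i k, 0 ≤ c i k := fun i k => (hc i k).le
  set T := kernelOp c (‖denom c z w ·‖) (‖denom c z w ·‖) (fun j => (w j).im) i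
  set T' := kernelOp c (‖denom c z w' ·‖) (‖denom c z w' ·‖) (fun j => (w' j).im) i
  have hT : 0 ≤ t * T := mul_nonneg ht.le
    (kernelOp_nonneg hc0 (fun _ => norm_nonneg _) (fun _ => norm_nonneg _) (fun j => (hw j).le) i)
  have hT' : 0 ≤ t * T' := mul_nonneg ht.le
    (kernelOp_nonneg hc0 (fun _ => norm_nonneg _) (fun _ => norm_nonneg _) (fun j => (hw' j).le) i)
  calc _ ≤ t * (√T * √T') := mul_le_mul_of_nonneg_left
          (kernelOp_sqrt_mul_sqrt_le hc0 (fun j => (hw j).le) (fun j => (hw' j).le) i) ht.le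
    _ = √(t * T) * √(t * T') := by
        rw [Real.sqrt_mul ht.le, Real.sqrt_mul ht.le, mul_mul_mul_comm, Real.mul_self_sqrt ht.le]
    _ < √(w i).im * √(w' i).im :=
        mul_lt_mul'' (Real.sqrt_lt_sqrt hT (h.kernelOp_im_lt hz hc ht hw i))
          (Real.sqrt_lt_sqrt hT' (h'.kernelOp_im_lt hz hc ht hw' i))
          (Real.sqrt_nonneg _) (Real.sqrt_nonneg _)

theorem unique (hz : 0 < z.im) (hc : ∀ i k, 0 < c i k) (ht : 0 < t) [Nonempty κ]
    (hw : ∀ j, 0 < (w j).im) (hw' : ∀ j, 0 < (w' j).im)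
    (h : IsSelfConsistent c t z w) (h' : IsSelfConsistent c t z w') : w = w' := by
  have hc0 : ∀ i k, 0 ≤ c i k := fun i k => (hc i k).le
  have hd := denom_ne_zero hz hc0 fun j => (hw j).le
  have hd' := denom_ne_zero hz hc0 fun j => (hw' j).le
  have hzero : (fun j => ‖w j - w' j‖) = 0 := by
    refine eq_zero_of_le_mul_imp_lt (fun j => norm_nonneg _)
      (fun j => mul_pos (Real.sqrt_pos.2 (hw j)) (Real.sqrt_pos.2 (hw' j))) fun r hr hle i => ?_
    calc ‖w i - w' i‖
        ≤ t * kernelOp c (‖denom c z w ·‖) (‖denom c z w' ·‖) (fun j => ‖w j - w' j‖) i :=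
          norm_sub_le hc0 ht.le h h' hd hd' i
      _ ≤ t * kernelOp c (‖denom c z w ·‖) (‖denom c z w' ·‖)
            (fun j => r * (√(w j).im * √(w' j).im)) i :=
          mul_le_mul_of_nonneg_left (kernelOp_mono hc0 (fun _ => norm_nonneg _)
            (fun _ => norm_nonneg _) hle i) ht.le
      _ = r * (t * kernelOp c (‖denom c z w ·‖) (‖denom c z w' ·‖)
            (fun j => √(w j).im * √(w' j).im) i) := by
          rw [kernelOp_const_mul]; ring
      _ < r * (√(w i).im * √(w' i).im) :=
          mul_lt_mul_of_pos_left (kernelOp_sqrt_im_lt hz hc ht hw hw' h h' i) hr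
  funext j
  simpa [sub_eq_zero] using congrFun hzero j

end IsSelfConsistent

lemma isSelfConsistent_pair {α β : κ → ℝ} {p q : ℂ}
    (hp : p = -(t : ℂ) * ∑ k, (α k : ℂ) / (z + α k * p + β k * q))
    (hq : q = -(t : ℂ) * ∑ k, (β k : ℂ) / (z + α k * p + β k * q)) :
    IsSelfConsistent ![α, β] t z ![p, q] := by
  simp only [IsSelfConsistent, denom, Fin.forall_fin_two, Fin.sum_univ_two, Matrix.cons_val_zero,
    Matrix.cons_val_one, ← add_assoc]
  exact ⟨hp, hq⟩

end SelfConsistent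

open SelfConsistent

/-- uniqueness of the solution `(u, v) ∈ ℂ⁺ × ℂ⁺` to the self-consistent system. -/
theorem stmt_3 (z : ℂ) (hz : 0 < z.im) (N : ℕ) (hN : 1 ≤ N)
    (α β : Fin N → ℝ) (hα : ∀ k, 1 ≤ α k) (hβ : ∀ k, 1 ≤ β k)
    (u v u' v' : ℂ) (hu : 0 < u.im) (hv : 0 < v.im) (hu' : 0 < u'.im) (hv' : 0 < v'.im)
    (hequ : u = -(1 / N) * ∑ k, (α k : ℂ) / (z + α k * u + β k * v))
    (heqv : v = -(1 / N) * ∑ k, (β k : ℂ) / (z + α k * u + β k * v))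
    (hequ' : u' = -(1 / N) * ∑ k, (α k : ℂ) / (z + α k * u' + β k * v'))
    (heqv' : v' = -(1 / N) * ∑ k, (β k : ℂ) / (z + α k * u' + β k * v')) :
    u = u' ∧ v = v' := by
  have : Nonempty (Fin N) := ⟨⟨0, hN⟩⟩
  have hc : ∀ i k, 0 < ![α, β] i k := by
    simp only [Fin.forall_fin_two, Matrix.cons_val_zero, Matrix.cons_val_one]
    exact ⟨fun k => one_pos.trans_le (hα k), fun k => one_pos.trans_le (hβ k)⟩
  have ht : (1 / N : ℂ) = ((1 / N : ℝ) : ℂ) := by push_cast; rfl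
  rw [ht] at hequ heqv hequ' heqv'
  have huv := (isSelfConsistent_pair hequ heqv).unique hz hc (by positivity)
    (by simp [Fin.forall_fin_two, hu, hv]) (by simp [Fin.forall_fin_two, hu', hv'])
    (isSelfConsistent_pair hequ' heqv')
  exact ⟨congrFun huv 0, congrFun huv 1⟩
end

section
/- Let z ∈ ℂ⁺, N ≥ 1, and α_k, β_k ≥ 1 for k = 1,…,N. Suppose (u,v) ∈ ℂ⁺ × ℂ⁺ satisfies u = -(1/N) Σ_k α_k/(z + α_k u + β_k v) and v = -(1/N) Σ_k β_k/(z + α_k u + β_k v). Let T be the 2×2 real matrix T = (1/N) Σ_k |z + α_k u + β_k v|⁻² · [[α_k², α_k β_k],[α_k β_k, β_k²]]. Then applying T to the vector (Im u, Im v) gives a vector that is entrywise strictly less than (Im u, Im v); in particular the spectral radius of T is at most 1. -/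
open Complex Matrix

/-- the matrix `T` applied to `(Im u, Im v)` is entrywise strictly smaller than
`(Im u, Im v)`; in particular, the spectral radius of `T` is at most 1. -/
theorem stmt_4 (z : ℂ) (hz : 0 < z.im) (N : ℕ) (hN : 1 ≤ N)
    (α β : Fin N → ℝ) (hα : ∀ k, 1 ≤ α k) (hβ : ∀ k, 1 ≤ β k)
    (u v : ℂ) (hu : 0 < u.im) (hv : 0 < v.im)
    (hequ : u = -(1 / N) * ∑ k, (α k : ℂ) / (z + α k * u + β k * v))
    (heqv : v = -(1 / N) * ∑ k, (β k : ℂ) / (z + α k * u + β k * v)) :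
    let γ : Fin N → Fin 2 → ℝ := fun k => ![α k, β k]
    let T : Matrix (Fin 2) (Fin 2) ℝ := Matrix.of fun i j =>
      (1 / N) * ∑ k, γ k i * γ k j / ‖z + α k * u + β k * v‖ ^ 2
    (∀ i, T.mulVec ![u.im, v.im] i < (![u.im, v.im] : Fin 2 → ℝ) i) ∧
    (∀ μ : ℂ, (∃ w : Fin 2 → ℂ, w ≠ 0 ∧
        (T.map (fun x => (x : ℂ))).mulVec w = μ • w) → ‖μ‖ ≤ 1) := by
  intro γ T
  haveI : Nonempty (Fin N) := ⟨⟨0, hN⟩⟩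
  have hNpos : (0:ℝ) < N := by exact_mod_cast hN
  set d : Fin N → ℂ := fun k => z + α k * u + β k * v with hd
  have hdim : ∀ k, (d k).im = z.im + α k * u.im + β k * v.im := by
    intro k
    simp [hd, Complex.add_im, Complex.mul_im]
  have hdpos : ∀ k, 0 < (d k).im := by
    intro k
    rw [hdim]
    nlinarith [hα k, hβ k, hu, hv, hz]
  have hd0 : ∀ k, d k ≠ 0 := by
    intro k h
    have := hdpos k
    rw [h] at this
    simp at this
  have hn : ∀ k, 0 < Complex.normSq (d k) := fun k => Complex.normSq_pos.2 (hd0 k)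
  -- imaginary parts of the self-consistent equations
  have him : ∀ (c : Fin N → ℝ), (-(1 / (N:ℂ)) * ∑ k, (c k : ℂ) / d k).im
      = (1/N) * ∑ k, c k * (d k).im / Complex.normSq (d k) := by
    intro c
    rw [show -(1/(N:ℂ)) = ((-(1/N):ℝ):ℂ) by push_cast; ring, Complex.mul_im,
      Complex.ofReal_im, Complex.ofReal_re, zero_mul, add_zero, Complex.im_sum,
      Finset.mul_sum, Finset.mul_sum]
    refine Finset.sum_congr rfl fun k _ => ?_
    rw [Complex.div_im, Complex.ofReal_im, Complex.ofReal_re]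
    ring
  have him_u : u.im = (1/N) * ∑ k, α k * (d k).im / Complex.normSq (d k) := by
    conv_lhs => rw [hequ]
    exact him α
  have him_v : v.im = (1/N) * ∑ k, β k * (d k).im / Complex.normSq (d k) := by
    conv_lhs => rw [heqv]
    exact him β
  -- split the sums
  have hsplit : ∀ (c : Fin N → ℝ), ∑ k, c k * (d k).im / Complex.normSq (d k)
      = ∑ k, c k * z.im / Complex.normSq (d k)
        + ((∑ k, c k * α k / ‖d k‖ ^ 2) * u.im
          + (∑ k, c k * β k / ‖d k‖ ^ 2) * v.im) := by
    intro c
    have hterm : ∀ k, c k * (d k).im / Complex.normSq (d k)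
        = c k * z.im / Complex.normSq (d k)
          + (c k * α k / ‖d k‖ ^ 2 * u.im + c k * β k / ‖d k‖ ^ 2 * v.im) := by
      intro k
      rw [hdim, Complex.sq_norm]
      have := (hn k).ne'
      field_simp
      ring
    rw [Finset.sum_congr rfl (fun k _ => hterm k), Finset.sum_add_distrib, Finset.sum_add_distrib,
      ← Finset.sum_mul, ← Finset.sum_mul]
  have hposterm : ∀ (c : Fin N → ℝ), (∀ k, 1 ≤ c k) →
      0 < (1/N) * ∑ k, c k * z.im / Complex.normSq (d k) := by
    intro c hc
    apply mul_pos (by positivity)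
    apply Finset.sum_pos _ Finset.univ_nonempty
    intro k _
    have hck : 0 < c k := lt_of_lt_of_le one_pos (hc k)
    exact div_pos (mul_pos hck hz) (hn k)
  -- entrywise strict inequality
  have hT00 : T 0 0 = (1/N) * ∑ k, α k * α k / ‖d k‖ ^ 2 := rfl
  have hT01 : T 0 1 = (1/N) * ∑ k, α k * β k / ‖d k‖ ^ 2 := rfl
  have hT10 : T 1 0 = (1/N) * ∑ k, β k * α k / ‖d k‖ ^ 2 := rfl
  have hT11 : T 1 1 = (1/N) * ∑ k, β k * β k / ‖d k‖ ^ 2 := rfl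
  have hmain : ∀ i, T.mulVec ![u.im, v.im] i < (![u.im, v.im] : Fin 2 → ℝ) i := by
    intro i
    fin_cases i
    · show T.mulVec ![u.im, v.im] 0 < u.im
      rw [Matrix.mulVec, dotProduct, Fin.sum_univ_two]
      simp only [Matrix.cons_val_zero, Matrix.cons_val_one, Matrix.head_cons]
      rw [hT00, hT01]
      conv_rhs => rw [him_u, hsplit α]
      rw [mul_add, mul_add]
      have := hposterm α hα
      nlinarith [this]
    · show T.mulVec ![u.im, v.im] 1 < v.im
      rw [Matrix.mulVec, dotProduct, Fin.sum_univ_two]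
      simp only [Matrix.cons_val_zero, Matrix.cons_val_one, Matrix.head_cons]
      rw [hT10, hT11]
      conv_rhs => rw [him_v, hsplit β]
      rw [mul_add, mul_add]
      have := hposterm β hβ
      nlinarith [this]
  refine ⟨hmain, ?_⟩
  -- spectral radius part
  set ξ : Fin 2 → ℝ := ![u.im, v.im] with hξ
  have hξpos : ∀ i, 0 < ξ i := by intro i; fin_cases i <;> simpa [hξ]
  have hTnn : ∀ i j, 0 ≤ T i j := by
    intro i j
    apply mul_nonneg (by positivity)
    apply Finset.sum_nonneg
    intro k _
    have h1 : (0:ℝ) < γ k i := by fin_cases i <;> simp [γ] <;> linarith [hα k, hβ k]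
    have h2 : (0:ℝ) < γ k j := by fin_cases j <;> simp [γ] <;> linarith [hα k, hβ k]
    positivity
  have hTrow : ∀ i, ∑ j, T i j * ξ j < ξ i := by
    intro i
    have := hmain i
    rwa [Matrix.mulVec, dotProduct] at this
  rintro μ ⟨w, hw, hμw⟩
  obtain ⟨i₀, -, hmax⟩ := Finset.exists_max_image Finset.univ (fun i => ‖w i‖ / ξ i)
    Finset.univ_nonempty
  set r := ‖w i₀‖ / ξ i₀ with hr
  have hbound : ∀ j, ‖w j‖ ≤ r * ξ j := by
    intro j
    have := hmax j (Finset.mem_univ j)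
    rw [div_le_div_iff₀ (hξpos j) (hξpos i₀)] at this
    rw [hr, div_mul_eq_mul_div, le_div_iff₀ (hξpos i₀)]
    linarith
  have hrpos : 0 < r := by
    obtain ⟨j, hj⟩ := Function.ne_iff.1 hw
    have : 0 < ‖w j‖ := norm_pos_iff.2 hj
    have h2 := hmax j (Finset.mem_univ j)
    calc (0:ℝ) < ‖w j‖ / ξ j := div_pos this (hξpos j)
      _ ≤ r := h2
  have hwpos : 0 < ‖w i₀‖ := by
    have : ‖w i₀‖ = r * ξ i₀ := by rw [hr, div_mul_cancel₀ _ (hξpos i₀).ne']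
    rw [this]; exact mul_pos hrpos (hξpos i₀)
  have heig : μ * w i₀ = ∑ j, (T i₀ j : ℂ) * w j := by
    have := congrFun hμw i₀
    rw [Matrix.mulVec, dotProduct] at this
    simp only [Matrix.map_apply, Pi.smul_apply, smul_eq_mul] at this
    exact this.symm
  have key : ‖μ‖ * ‖w i₀‖ ≤ ‖w i₀‖ := by
    calc ‖μ‖ * ‖w i₀‖ = ‖μ * w i₀‖ := (norm_mul _ _).symm
      _ = ‖∑ j, (T i₀ j : ℂ) * w j‖ := by rw [heig]
      _ ≤ ∑ j, ‖(T i₀ j : ℂ) * w j‖ := norm_sum_le _ _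
      _ = ∑ j, T i₀ j * ‖w j‖ := by
          refine Finset.sum_congr rfl fun j _ => ?_
          rw [norm_mul, Complex.norm_real, Real.norm_of_nonneg (hTnn i₀ j)]
      _ ≤ ∑ j, T i₀ j * (r * ξ j) := by
          refine Finset.sum_le_sum fun j _ => ?_
          exact mul_le_mul_of_nonneg_left (hbound j) (hTnn i₀ j)
      _ = r * ∑ j, T i₀ j * ξ j := by rw [Finset.mul_sum]; exact Finset.sum_congr rfl fun j _ => by ring
      _ ≤ r * ξ i₀ := mul_le_mul_of_nonneg_left (hTrow i₀).le hrpos.le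
      _ = ‖w i₀‖ := by rw [hr, div_mul_cancel₀ _ (hξpos i₀).ne']
  have h1 : ‖μ‖ * ‖w i₀‖ ≤ 1 * ‖w i₀‖ := by rw [one_mul]; exact key
  exact le_of_mul_le_mul_right h1 hwpos
end

section
/- Let s : [0,1]² → ℝ be continuous, symmetric, and nonnegative, with associated integral operator S on L²([0,1]). Fix z ∈ ℂ⁺. Then there is at most one bounded measurable g : [0,1] → ℂ⁺ satisfying g(x) = −1/(z + (Sg)(x)) for all x ∈ [0,1]. -/
/-!
Compare two solutions through `w = |g - g'|` and `u = √(Im g · Im g')`. Subtracting the two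
equations gives `w ≤ (S w) |g| |g'|`, while `Im g = (Im z + S Im g) |g|²`, Cauchy–Schwarz and
`Im z > 0` give the strict contraction `(S u) |g| |g'| < u`. At a maximum point of the continuous
ratio `w / u` on the compact set `K` the two are incompatible unless `w = 0`.
-/

open Complex MeasureTheory Set

theorem integral_sqrt_mul_le_sqrt_mul_integral {α : Type*} [MeasurableSpace α] {μ : Measure α}
    {f g : α → ℝ} (hf₀ : 0 ≤ᵐ[μ] f) (hg₀ : 0 ≤ᵐ[μ] g) (hf : Integrable f μ)
    (hg : Integrable g μ) :
    ∫ a, √(f a * g a) ∂μ ≤ √((∫ a, f a ∂μ) * ∫ a, g a ∂μ) := by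
  have memLp_sqrt : ∀ {h : α → ℝ}, 0 ≤ᵐ[μ] h → Integrable h μ →
      MemLp (fun a => √(h a)) (ENNReal.ofReal 2) μ := fun h₀ h => by
    rw [ENNReal.ofReal_ofNat, memLp_two_iff_integrable_sq
      (Real.continuous_sqrt.comp_aestronglyMeasurable h.aestronglyMeasurable)]
    exact h.congr (h₀.mono fun a ha => (Real.sq_sqrt ha).symm)
  have integral_sqrt_rpow : ∀ {h : α → ℝ}, 0 ≤ᵐ[μ] h →
      ∫ a, √(h a) ^ (2 : ℝ) ∂μ = ∫ a, h a ∂μ := fun h₀ =>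
    integral_congr_ae (h₀.mono fun a ha => by simp [Real.sq_sqrt ha])
  have holder := integral_mul_le_Lp_mul_Lq_of_nonneg Real.HolderConjugate.two_two
    (.of_forall fun a => Real.sqrt_nonneg (f a)) (.of_forall fun a => Real.sqrt_nonneg (g a))
    (memLp_sqrt hf₀ hf) (memLp_sqrt hg₀ hg)
  rw [integral_sqrt_rpow hf₀, integral_sqrt_rpow hg₀, ← Real.sqrt_eq_rpow,
    ← Real.sqrt_eq_rpow, ← Real.sqrt_mul (integral_nonneg_of_ae hf₀)] at holder
  refine le_of_eq_of_le (integral_congr_ae ?_) holder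
  filter_upwards [hf₀] with a ha
  exact Real.sqrt_mul ha _

theorem Complex.im_integral_ofReal_mul {α : Type*} [MeasurableSpace α] {μ : Measure α}
    {r : α → ℝ} {f : α → ℂ} (hf : Integrable (fun a => (r a : ℂ) * f a) μ) :
    (∫ a, (r a : ℂ) * f a ∂μ).im = ∫ a, r a * (f a).im ∂μ := by
  simpa using (integral_im hf).symm

theorem Complex.im_neg_inv (a : ℂ) : (-a⁻¹).im = a.im * ‖a⁻¹‖ ^ 2 := by
  rw [neg_im, inv_im, norm_inv, inv_pow, Complex.sq_norm]
  ring

section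

variable {X : Type*} {K : Set X} {s : X → X → ℝ}

-- The quadratic vector equation `g = -(z + S g)⁻¹` on `K`, `S` the integral operator of `s`.
structure IsQVESolution [MeasurableSpace X] (μ : Measure X) (K : Set X) (s : X → X → ℝ)
    (z : ℂ) (g : X → ℂ) : Prop where
  measurable : Measurable g
  bounded : ∃ C, ∀ x, ‖g x‖ ≤ C
  im_pos : ∀ x ∈ K, 0 < (g x).im
  eq_neg_inv : ∀ x ∈ K, g x = -(z + ∫ y in K, (s x y : ℂ) * g y ∂μ)⁻¹

namespace IsQVESolution

variable [MeasurableSpace X] {μ : Measure X} {z : ℂ} {g : X → ℂ}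

theorem ne_zero (hg : IsQVESolution μ K s z g) {x : X} (hx : x ∈ K) : g x ≠ 0 := fun h => by
  simpa [h] using hg.im_pos x hx

theorem add_setIntegral_ne_zero (hg : IsQVESolution μ K s z g) {x : X} (hx : x ∈ K) :
    z + ∫ y in K, (s x y : ℂ) * g y ∂μ ≠ 0 := fun h =>
  hg.ne_zero hx (by simp [hg.eq_neg_inv x hx, h])

end IsQVESolution

variable [TopologicalSpace X]

theorem continuousOn_kernel_left (hs : ContinuousOn (Function.uncurry s) (K ×ˢ K)) {x : X}
    (hx : x ∈ K) : ContinuousOn (s x) K :=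
  hs.comp (continuousOn_const.prodMk continuousOn_id) fun _ hy => ⟨hx, hy⟩

theorem continuousOn_kernel_right (hs : ContinuousOn (Function.uncurry s) (K ×ˢ K)) {y : X}
    (hy : y ∈ K) : ContinuousOn (fun x => s x y) K :=
  hs.comp (continuousOn_id.prodMk continuousOn_const) fun _ hx => ⟨hx, hy⟩

variable [MeasurableSpace X] [T2Space X] [OpensMeasurableSpace X] [FirstCountableTopology X]
  {μ : Measure X} [IsFiniteMeasureOnCompacts μ]

theorem continuousOn_setIntegral_kernel_mul (hK : IsCompact K)
    (hs : ContinuousOn (Function.uncurry s) (K ×ˢ K)) {f : X → ℂ}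
    (hf : AEStronglyMeasurable f (μ.restrict K)) {C : ℝ} (hC : ∀ y, ‖f y‖ ≤ C) :
    ContinuousOn (fun x => ∫ y in K, (s x y : ℂ) * f y ∂μ) K := by
  obtain ⟨M, hM⟩ := (hK.prod hK).exists_bound_of_continuousOn hs
  have : IsFiniteMeasure (μ.restrict K) := isFiniteMeasure_restrict.2 hK.measure_ne_top
  refine continuousOn_of_dominated (bound := fun _ => M * C) (fun x hx => ?_) (fun x hx => ?_)
    (integrable_const _) ?_
  · exact ((continuous_ofReal.comp_continuousOn
      (continuousOn_kernel_left hs hx)).aestronglyMeasurable hK.measurableSet).mul hf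
  · filter_upwards [ae_restrict_mem hK.measurableSet] with y hy
    rw [norm_mul, norm_real]
    exact mul_le_mul (hM (x, y) ⟨hx, hy⟩) (hC y) (norm_nonneg _)
      ((norm_nonneg _).trans (hM (x, x) ⟨hx, hx⟩))
  · filter_upwards [ae_restrict_mem hK.measurableSet] with y hy
    exact (continuous_ofReal.comp_continuousOn (continuousOn_kernel_right hs hy)).mul
      continuousOn_const

namespace IsQVESolution

variable {z : ℂ} {g g' : X → ℂ} (hK : IsCompact K)
  (hs : ContinuousOn (Function.uncurry s) (K ×ˢ K)) (hs₀ : ∀ x y, 0 ≤ s x y)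
include hK hs

theorem continuousOn (hg : IsQVESolution μ K s z g) : ContinuousOn g K := by
  obtain ⟨C, hC⟩ := hg.bounded
  refine (ContinuousOn.inv₀ ?_ fun x hx => hg.add_setIntegral_ne_zero hx).neg.congr
    hg.eq_neg_inv
  exact continuousOn_const.add
    (continuousOn_setIntegral_kernel_mul hK hs hg.measurable.aestronglyMeasurable hC)

theorem integrableOn_kernel_mul (hg : IsQVESolution μ K s z g) {x : X} (hx : x ∈ K) :
    IntegrableOn (fun y => (s x y : ℂ) * g y) K μ :=
  ((continuous_ofReal.comp_continuousOn (continuousOn_kernel_left hs hx)).mul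
    (hg.continuousOn hK hs)).integrableOn_compact hK

theorem im_eq_mul_sq_norm (hg : IsQVESolution μ K s z g) {x : X} (hx : x ∈ K) :
    (g x).im = (z.im + ∫ y in K, s x y * (g y).im ∂μ) * ‖g x‖ ^ 2 := by
  rw [hg.eq_neg_inv x hx, im_neg_inv, norm_neg, add_im,
    im_integral_ofReal_mul (hg.integrableOn_kernel_mul hK hs hx)]

include hs₀

theorem norm_sub_le (hg : IsQVESolution μ K s z g) (hg' : IsQVESolution μ K s z g') {x : X}
    (hx : x ∈ K) :
    ‖g x - g' x‖
      ≤ (∫ y in K, s x y * ‖g y - g' y‖ ∂μ) * (‖g x‖ * ‖g' x‖) := by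
  have hdiff : g x - g' x = g' x * (∫ y in K, (s x y : ℂ) * (g y - g' y) ∂μ) * g x := by
    rw [hg.eq_neg_inv x hx, hg'.eq_neg_inv x hx, neg_sub_neg,
      inv_sub_inv' (hg'.add_setIntegral_ne_zero hx) (hg.add_setIntegral_ne_zero hx),
      add_sub_add_left_eq_sub, ← integral_sub (hg.integrableOn_kernel_mul hK hs hx)
      (hg'.integrableOn_kernel_mul hK hs hx)]
    simp only [mul_sub, neg_mul, mul_neg, neg_neg]
  have hnorm : ‖∫ y in K, (s x y : ℂ) * (g y - g' y) ∂μ‖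
      ≤ ∫ y in K, s x y * ‖g y - g' y‖ ∂μ := by
    refine (norm_integral_le_integral_norm _).trans_eq
      (integral_congr_ae (.of_forall fun y => ?_))
    simp [abs_of_nonneg (hs₀ x y)]
  calc ‖g x - g' x‖
        = ‖∫ y in K, (s x y : ℂ) * (g y - g' y) ∂μ‖ * (‖g x‖ * ‖g' x‖) := by
        rw [hdiff, norm_mul, norm_mul]; ring
    _ ≤ _ := mul_le_mul_of_nonneg_right hnorm (by positivity)

theorem setIntegral_kernel_mul_sqrt_im_mul_im_lt (hz : 0 < z.im) (hg : IsQVESolution μ K s z g)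
    (hg' : IsQVESolution μ K s z g') {x : X} (hx : x ∈ K) :
    (∫ y in K, s x y * √((g y).im * (g' y).im) ∂μ) * (‖g x‖ * ‖g' x‖)
      < √((g x).im * (g' x).im) := by
  set A := ∫ y in K, s x y * (g y).im ∂μ
  set B := ∫ y in K, s x y * (g' y).im ∂μ
  have integrableOn_im : ∀ {f : X → ℂ}, IsQVESolution μ K s z f →
      IntegrableOn (fun y => s x y * (f y).im) K μ := fun hf =>
    ((continuousOn_kernel_left hs hx).mul
      (continuous_im.comp_continuousOn (hf.continuousOn hK hs))).integrableOn_compact hK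
  have nonneg_im : ∀ {f : X → ℂ}, IsQVESolution μ K s z f →
      0 ≤ᵐ[μ.restrict K] fun y => s x y * (f y).im := fun hf => by
    filter_upwards [ae_restrict_mem hK.measurableSet] with y hy
    exact mul_nonneg (hs₀ x y) (hf.im_pos y hy).le
  have cauchy_schwarz : ∫ y in K, s x y * √((g y).im * (g' y).im) ∂μ ≤ √(A * B) := by
    refine le_of_eq_of_le (setIntegral_congr_fun hK.measurableSet fun y _ => ?_)
      (integral_sqrt_mul_le_sqrt_mul_integral (nonneg_im hg) (nonneg_im hg')
        (integrableOn_im hg) (integrableOn_im hg'))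
    rw [mul_mul_mul_comm, Real.sqrt_mul (mul_self_nonneg _), Real.sqrt_mul_self (hs₀ x y)]
  have hA : 0 ≤ A := integral_nonneg_of_ae (nonneg_im hg)
  have hB : 0 ≤ B := integral_nonneg_of_ae (nonneg_im hg')
  have hP : 0 < ‖g x‖ * ‖g' x‖ :=
    mul_pos (norm_pos_iff.2 (hg.ne_zero hx)) (norm_pos_iff.2 (hg'.ne_zero hx))
  calc (∫ y in K, s x y * √((g y).im * (g' y).im) ∂μ) * (‖g x‖ * ‖g' x‖)
      ≤ √(A * B) * (‖g x‖ * ‖g' x‖) := by gcongr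
    _ < √((z.im + A) * (z.im + B)) * (‖g x‖ * ‖g' x‖) :=
      mul_lt_mul_of_pos_right (Real.sqrt_lt_sqrt (mul_nonneg hA hB) (by nlinarith)) hP
    _ = √((g x).im * (g' x).im) := by
      rw [hg.im_eq_mul_sq_norm hK hs hx, hg'.im_eq_mul_sq_norm hK hs hx, mul_mul_mul_comm,
        ← mul_pow, Real.sqrt_mul' _ (sq_nonneg _), Real.sqrt_sq hP.le]

theorem eqOn (hz : 0 < z.im) (hg : IsQVESolution μ K s z g) (hg' : IsQVESolution μ K s z g') :
    EqOn g g' K := by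
  rcases K.eq_empty_or_nonempty with rfl | hK_ne
  · exact eqOn_empty g g'
  set w : X → ℝ := fun x => ‖g x - g' x‖
  set u : X → ℝ := fun x => √((g x).im * (g' x).im)
  have hu : ∀ x ∈ K, 0 < u x := fun x hx =>
    Real.sqrt_pos.2 (mul_pos (hg.im_pos x hx) (hg'.im_pos x hx))
  have hw_cont : ContinuousOn w K := ((hg.continuousOn hK hs).sub (hg'.continuousOn hK hs)).norm
  have hu_cont : ContinuousOn u K :=
    ((continuous_im.comp_continuousOn (hg.continuousOn hK hs)).mul
      (continuous_im.comp_continuousOn (hg'.continuousOn hK hs))).sqrt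
  obtain ⟨x₀, hx₀, hmax⟩ :=
    hK.exists_isMaxOn hK_ne (hw_cont.div hu_cont fun x hx => (hu x hx).ne')
  set c := w x₀ / u x₀
  have hwc : ∀ x ∈ K, w x ≤ c * u x := fun x hx => (div_le_iff₀ (hu x hx)).1 (hmax hx)
  suffices hc : c ≤ 0 from fun x hx => sub_eq_zero.1 <| norm_le_zero_iff.1 <|
    (hwc x hx).trans (mul_nonpos_of_nonpos_of_nonneg hc (hu x hx).le)
  by_contra! hc
  have hSw : ∫ y in K, s x₀ y * w y ∂μ ≤ c * ∫ y in K, s x₀ y * u y ∂μ := by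
    have hs_x₀ := continuousOn_kernel_left hs hx₀
    rw [← integral_const_mul]
    refine setIntegral_mono_on ((hs_x₀.mul hw_cont).integrableOn_compact hK)
      (((hs_x₀.mul hu_cont).integrableOn_compact hK).const_mul c) hK.measurableSet fun y hy => ?_
    rw [mul_left_comm]
    exact mul_le_mul_of_nonneg_left (hwc y hy) (hs₀ x₀ y)
  have : w x₀ < w x₀ := calc
    w x₀ ≤ (∫ y in K, s x₀ y * w y ∂μ) * (‖g x₀‖ * ‖g' x₀‖) :=
      hg.norm_sub_le hK hs hs₀ hg' hx₀
    _ ≤ c * ((∫ y in K, s x₀ y * u y ∂μ) * (‖g x₀‖ * ‖g' x₀‖)) := by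
      rw [← mul_assoc c]
      exact mul_le_mul_of_nonneg_right hSw (by positivity)
    _ < c * u x₀ := mul_lt_mul_of_pos_left
      (setIntegral_kernel_mul_sqrt_im_mul_im_lt hK hs hs₀ hz hg hg' hx₀) hc
    _ = w x₀ := div_mul_cancel₀ _ (hu x₀ hx₀).ne'
  exact lt_irrefl _ this

end IsQVESolution

end

theorem stmt_13_general (s : ℝ → ℝ → ℝ)
    (hs_cont : ContinuousOn (fun p : ℝ × ℝ => s p.1 p.2)
      (Set.Icc 0 1 ×ˢ Set.Icc (0 : ℝ) 1))
    (hs_nonneg : ∀ x y, 0 ≤ s x y)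
    (z : ℂ) (hz : 0 < z.im)
    (g g' : ℝ → ℂ) (hg_meas : Measurable g) (hg'_meas : Measurable g')
    (hg_bdd : ∃ C, ∀ x, ‖g x‖ ≤ C)
    (hg'_bdd : ∃ C, ∀ x, ‖g' x‖ ≤ C)
    (hg_up : ∀ x ∈ Set.Icc (0 : ℝ) 1, 0 < (g x).im)
    (hg'_up : ∀ x ∈ Set.Icc (0 : ℝ) 1, 0 < (g' x).im)
    (hg_eq : ∀ x ∈ Set.Icc (0 : ℝ) 1,
      g x = -(z + ∫ y in Set.Icc (0 : ℝ) 1, (s x y : ℂ) * g y)⁻¹)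
    (hg'_eq : ∀ x ∈ Set.Icc (0 : ℝ) 1,
      g' x = -(z + ∫ y in Set.Icc (0 : ℝ) 1, (s x y : ℂ) * g' y)⁻¹) :
    ∀ x ∈ Set.Icc (0 : ℝ) 1, g x = g' x :=
  IsQVESolution.eqOn isCompact_Icc hs_cont hs_nonneg hz ⟨hg_meas, hg_bdd, hg_up, hg_eq⟩
    ⟨hg'_meas, hg'_bdd, hg'_up, hg'_eq⟩

/-- uniqueness of the bounded measurable solution `g : [0,1] → ℂ⁺` of the
quadratic vector equation `g(x) = -1/(z + (Sg)(x))`. -/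
theorem stmt_13 (s : ℝ → ℝ → ℝ)
    (hs_cont : ContinuousOn (fun p : ℝ × ℝ => s p.1 p.2)
      (Set.Icc 0 1 ×ˢ Set.Icc (0 : ℝ) 1))
    (hs_symm : ∀ x y, s x y = s y x)
    (hs_nonneg : ∀ x y, 0 ≤ s x y)
    (z : ℂ) (hz : 0 < z.im)
    (g g' : ℝ → ℂ) (hg_meas : Measurable g) (hg'_meas : Measurable g')
    (hg_bdd : ∃ C, ∀ x, ‖g x‖ ≤ C)
    (hg'_bdd : ∃ C, ∀ x, ‖g' x‖ ≤ C)
    (hg_up : ∀ x ∈ Set.Icc (0 : ℝ) 1, 0 < (g x).im)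
    (hg'_up : ∀ x ∈ Set.Icc (0 : ℝ) 1, 0 < (g' x).im)
    (hg_eq : ∀ x ∈ Set.Icc (0 : ℝ) 1,
      g x = -(z + ∫ y in Set.Icc (0 : ℝ) 1, (s x y : ℂ) * g y)⁻¹)
    (hg'_eq : ∀ x ∈ Set.Icc (0 : ℝ) 1,
      g' x = -(z + ∫ y in Set.Icc (0 : ℝ) 1, (s x y : ℂ) * g' y)⁻¹) :
    ∀ x ∈ Set.Icc (0 : ℝ) 1, g x = g' x :=
  stmt_13_general s hs_cont hs_nonneg z hz g g' hg_meas hg'_meas hg_bdd hg'_bdd hg_up hg'_up hg_eq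
    hg'_eq
end

section
/- Fix z ∈ ℂ⁺, N ≥ 1, α_k, β_k ≥ 1. The solution map z ↦ (u(z), v(z)) of the system u = -(1/N) Σ_k α_k/(z + α_k u + β_k v), v = -(1/N) Σ_k β_k/(z + α_k u + β_k v) is holomorphic on ℂ⁺. -/
/-!
The solution is the limit of the fixed-point iteration `p ↦ F_z p` started at `(i, i)`, where
`F_z p = -(1/N) ∑ₖ cₖ / (z + ⟪cₖ, p⟫)` and `cₖ = (αₖ, βₖ)`. On the upper half-plane the ratio
`‖a - b‖ / √(Im a * Im b)`, a monotone function of the hyperbolic distance, does not increase under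
positive linear combinations (Cauchy–Schwarz), is invariant under `w ↦ -w⁻¹`, and is multiplied by
at most `1 - η / M` under `w ↦ z + w` as long as `η ≤ Im z` and `‖z + w‖ ≤ M`. So `F_z` contracts
this ratio in each coordinate, with a factor and a priori bounds that are uniform on
`{η ≤ Im z, ‖z‖ ≤ R}`. The iterates, holomorphic in `z`, therefore converge geometrically and
locally uniformly, and their limit is a holomorphic solution.
-/

open Complex Finset Filter Topology

theorem exists_differentiableOn_tendsto_of_dist_le_geometric {E : Type*} [NormedAddCommGroup E]
    [NormedSpace ℂ E] [CompleteSpace E] {U : Set ℂ} (hU : IsOpen U) {f : ℕ → ℂ → E}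
    (hf : ∀ n, DifferentiableOn ℂ (f n) U)
    (hgeom : ∀ z ∈ U, ∃ t ∈ 𝓝 z, ∃ C r : ℝ, 0 ≤ r ∧ r < 1 ∧
      ∀ n, ∀ w ∈ t, dist (f n w) (f (n + 1) w) ≤ C * r ^ n) :
    ∃ g : ℂ → E, DifferentiableOn ℂ g U ∧ ∀ z ∈ U, Tendsto (fun n ↦ f n z) atTop (𝓝 (g z)) := by
  set g : ℂ → E := fun z ↦ limUnder atTop (fun n ↦ f n z)
  have hlim : ∀ z ∈ U, Tendsto (fun n ↦ f n z) atTop (𝓝 (g z)) := fun z hz ↦ by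
    obtain ⟨t, ht, C, r, -, hr, hdist⟩ := hgeom z hz
    exact (cauchySeq_of_le_geometric r C hr fun n ↦
      hdist n z (mem_of_mem_nhds ht)).tendsto_limUnder
  have hunif : TendstoLocallyUniformlyOn f g atTop U := by
    refine tendstoLocallyUniformlyOn_of_forall_exists_nhds fun z hz ↦ ?_
    obtain ⟨t, ht, C, r, hr₀, hr, hdist⟩ := hgeom z hz
    refine ⟨U ∩ t, inter_mem_nhdsWithin U ht, Metric.tendstoUniformlyOn_iff.2 fun ε hε ↦ ?_⟩
    have hsmall : Tendsto (fun n : ℕ ↦ C * r ^ n / (1 - r)) atTop (𝓝 0) := by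
      simpa using ((tendsto_pow_atTop_nhds_zero_of_lt_one hr₀ hr).const_mul C).div_const (1 - r)
    filter_upwards [hsmall.eventually (gt_mem_nhds hε)] with n hn w hw
    rw [dist_comm]
    exact (dist_le_of_le_geometric_of_tendsto r C hr (fun n ↦ hdist n w hw.2)
      (hlim w hw.1) n).trans_lt hn
  exact ⟨g, hunif.differentiableOn (Eventually.of_forall hf) hU, hlim⟩

namespace Complex

lemma norm_sum_sub_sum_le_mul_sqrt {κ : Type*} (s : Finset κ) {w : κ → ℝ}
    (hw : ∀ k, 0 ≤ w k) {a b : κ → ℂ} (ha : ∀ k, 0 ≤ (a k).im) (hb : ∀ k, 0 ≤ (b k).im)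
    {m : ℝ} (hm : 0 ≤ m) (hab : ∀ k, ‖a k - b k‖ ≤ m * √((a k).im * (b k).im)) :
    ‖∑ k ∈ s, (w k : ℂ) * a k - ∑ k ∈ s, (w k : ℂ) * b k‖ ≤
      m * √((∑ k ∈ s, (w k : ℂ) * a k).im * (∑ k ∈ s, (w k : ℂ) * b k).im) := by
  simp only [im_sum, im_ofReal_mul, ← sum_sub_distrib, ← mul_sub]
  calc ‖∑ k ∈ s, (w k : ℂ) * (a k - b k)‖
      ≤ ∑ k ∈ s, w k * ‖a k - b k‖ := by
        refine (norm_sum_le _ _).trans_eq (sum_congr rfl fun k _ ↦ ?_)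
        rw [norm_mul, norm_real, Real.norm_of_nonneg (hw k)]
    _ ≤ ∑ k ∈ s, w k * (m * √((a k).im * (b k).im)) :=
        sum_le_sum fun k _ ↦ mul_le_mul_of_nonneg_left (hab k) (hw k)
    _ = m * ∑ k ∈ s, √(w k * (a k).im) * √(w k * (b k).im) := by
        rw [mul_sum]
        refine sum_congr rfl fun k _ ↦ ?_
        rw [← Real.sqrt_mul (mul_nonneg (hw k) (ha k)),
          show w k * (a k).im * (w k * (b k).im) = w k ^ 2 * ((a k).im * (b k).im) by ring,
          Real.sqrt_mul (sq_nonneg _), Real.sqrt_sq (hw k)]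
        ring
    _ ≤ m * √((∑ k ∈ s, w k * (a k).im) * ∑ k ∈ s, w k * (b k).im) := by
        rw [Real.sqrt_mul (sum_nonneg fun k _ ↦ mul_nonneg (hw k) (ha k))]
        exact mul_le_mul_of_nonneg_left (Real.sum_sqrt_mul_sqrt_le s
          (fun k ↦ mul_nonneg (hw k) (ha k)) fun k ↦ mul_nonneg (hw k) (hb k)) hm

lemma im_neg_inv_s16 (a : ℂ) : (-a⁻¹).im = a.im / normSq a := by
  rw [neg_im, inv_im, neg_div, neg_neg]

lemma norm_neg_inv_sub_neg_inv_le_mul_sqrt {a b : ℂ} (ha : a ≠ 0) (hb : b ≠ 0) {m : ℝ}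
    (hab : ‖a - b‖ ≤ m * √(a.im * b.im)) :
    ‖-a⁻¹ - -b⁻¹‖ ≤ m * √((-a⁻¹).im * (-b⁻¹).im) := by
  have hnorm : ‖-a⁻¹ - -b⁻¹‖ = ‖a - b‖ / (‖a‖ * ‖b‖) := by
    rw [neg_sub_neg, inv_sub_inv hb ha, norm_div, norm_mul, mul_comm]
  have hsqrt : √((-a⁻¹).im * (-b⁻¹).im) = √(a.im * b.im) / (‖a‖ * ‖b‖) := by
    rw [im_neg_inv_s16, im_neg_inv_s16, ← Complex.sq_norm, ← Complex.sq_norm, div_mul_div_comm,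
      Real.sqrt_div' _ (by positivity), ← mul_pow, Real.sqrt_sq (by positivity)]
  rw [hnorm, hsqrt, mul_div_assoc']
  exact div_le_div_of_nonneg_right hab (by positivity)

lemma norm_add_sub_add_le_mul_sqrt {z a b : ℂ} (hz : 0 < z.im) (ha : 0 ≤ a.im)
    (hb : 0 ≤ b.im) {θ m : ℝ} (hm : 0 ≤ m) (hθa : a.im ≤ θ * (z + a).im)
    (hθb : b.im ≤ θ * (z + b).im) (hab : ‖a - b‖ ≤ m * √(a.im * b.im)) :
    ‖(z + a) - (z + b)‖ ≤ θ * m * √((z + a).im * (z + b).im) := by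
  have hθ : 0 ≤ θ :=
    nonneg_of_mul_nonneg_left (ha.trans hθa) (by rw [add_im]; linarith)
  rw [add_sub_add_left_eq_sub, mul_assoc, mul_left_comm]
  refine hab.trans (mul_le_mul_of_nonneg_left ?_ hm)
  calc √(a.im * b.im) ≤ √(θ ^ 2 * ((z + a).im * (z + b).im)) :=
        Real.sqrt_le_sqrt (by nlinarith [mul_le_mul hθa hθb hb (ha.trans hθa)])
    _ = θ * √((z + a).im * (z + b).im) := by
        rw [Real.sqrt_mul (sq_nonneg θ), Real.sqrt_sq hθ]

end Complex

namespace VectorDyson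

variable {ι : Type*} [Fintype ι] {N : ℕ} (c : Fin N → ι → ℝ)

def denom (z : ℂ) (p : ι → ℂ) (k : Fin N) : ℂ := z + ∑ i, c k i * p i

noncomputable def map (z : ℂ) (p : ι → ℂ) (j : ι) : ℂ :=
  -(1 / N) * ∑ k, (c k j : ℂ) / denom c z p k

variable {c}

lemma map_eq_sum (z : ℂ) (p : ι → ℂ) (j : ι) :
    map c z p j = ∑ k, ((c k j / N : ℝ) : ℂ) * -(denom c z p k)⁻¹ := by
  simp only [map, mul_sum, div_eq_mul_inv]
  refine sum_congr rfl fun k _ ↦ ?_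
  push_cast
  ring

lemma im_map (z : ℂ) (p : ι → ℂ) (j : ι) :
    (map c z p j).im = ∑ k, c k j / N * ((denom c z p k).im / normSq (denom c z p k)) := by
  simp only [map_eq_sum, im_sum, im_ofReal_mul, im_neg_inv_s16]

lemma im_le_im_denom (hc : ∀ k i, 0 ≤ c k i) {z : ℂ} {p : ι → ℂ} (hp : ∀ i, 0 ≤ (p i).im)
    (k : Fin N) : z.im ≤ (denom c z p k).im := by
  simp only [denom, add_im, im_sum, im_ofReal_mul, le_add_iff_nonneg_right]
  exact sum_nonneg fun i _ ↦ mul_nonneg (hc k i) (hp i)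

lemma denom_ne_zero (hc : ∀ k i, 0 ≤ c k i) {z : ℂ} (hz : 0 < z.im) {p : ι → ℂ}
    (hp : ∀ i, 0 ≤ (p i).im) (k : Fin N) : denom c z p k ≠ 0 := fun h ↦ by
  simpa [h] using hz.trans_le (im_le_im_denom hc hp k)

lemma im_map_nonneg (hc : ∀ k i, 0 ≤ c k i) {z : ℂ} (hz : 0 < z.im) {p : ι → ℂ}
    (hp : ∀ i, 0 ≤ (p i).im) (j : ι) : 0 ≤ (map c z p j).im := by
  rw [im_map]
  exact sum_nonneg fun k _ ↦ mul_nonneg (div_nonneg (hc k j) N.cast_nonneg)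
    (div_nonneg (hz.le.trans (im_le_im_denom hc hp k)) (normSq_nonneg _))

lemma norm_map_le (hc : ∀ k i, 0 ≤ c k i) {z : ℂ} {η : ℝ} (hη : 0 < η) (hηz : η ≤ z.im)
    {p : ι → ℂ} (hp : ∀ i, 0 ≤ (p i).im) (j : ι) :
    ‖map c z p j‖ ≤ (∑ k, ∑ i, c k i) / η := by
  have hden : ∀ k, η ≤ ‖denom c z p k‖ := fun k ↦
    (hηz.trans (im_le_im_denom hc hp k)).trans (im_le_norm _)
  rw [map_eq_sum, sum_div]
  refine (norm_sum_le _ _).trans (sum_le_sum fun k _ ↦ ?_)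
  rw [norm_mul, norm_neg, norm_inv, norm_real,
    Real.norm_of_nonneg (div_nonneg (hc k j) N.cast_nonneg)]
  calc c k j / N * ‖denom c z p k‖⁻¹ ≤ c k j * η⁻¹ := by
        gcongr
        · exact hc k j
        · exact div_le_self (hc k j) (Nat.one_le_cast.2 k.pos)
        · exact hden k
    _ ≤ (∑ i, c k i) / η := by
        rw [← div_eq_mul_inv]
        exact div_le_div_of_nonneg_right (single_le_sum (fun i _ ↦ hc k i) (mem_univ j)) hη.le

lemma norm_denom_le (hc : ∀ k i, 0 ≤ c k i) (z : ℂ) {p : ι → ℂ} {a : ℝ} (ha : 0 ≤ a)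
    (hpa : ∀ i, ‖p i‖ ≤ a) (k : Fin N) : ‖denom c z p k‖ ≤ ‖z‖ + (∑ k, ∑ i, c k i) * a := by
  have hrow : ∑ i, c k i ≤ ∑ k, ∑ i, c k i :=
    single_le_sum (fun k _ ↦ sum_nonneg fun i _ ↦ hc k i) (mem_univ k)
  calc ‖denom c z p k‖ ≤ ‖z‖ + ∑ i, c k i * ‖p i‖ := by
        refine (norm_add_le _ _).trans ?_
        gcongr
        refine (norm_sum_le _ _).trans_eq ?_
        simp only [norm_mul, norm_real, Real.norm_of_nonneg (hc k _)]
    _ ≤ ‖z‖ + (∑ i, c k i) * a := by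
        rw [sum_mul]
        gcongr with i
        · exact hc k i
        · exact hpa i
    _ ≤ ‖z‖ + (∑ k, ∑ i, c k i) * a := by gcongr

lemma div_sq_le_im_map (hN : 0 < N) (hc : ∀ k i, 1 ≤ c k i) {z : ℂ} (hz : 0 < z.im)
    {p : ι → ℂ} (hp : ∀ i, 0 ≤ (p i).im) {M : ℝ} (hM : ∀ k, ‖denom c z p k‖ ≤ M) (j : ι) :
    z.im / M ^ 2 ≤ (map c z p j).im := by
  have hc₀ : ∀ k i, 0 ≤ c k i := fun k i ↦ zero_le_one.trans (hc k i)
  rw [im_map]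
  calc z.im / M ^ 2 = ∑ _k : Fin N, 1 / N * (z.im / M ^ 2) := by
        rw [sum_const, card_univ, Fintype.card_fin, nsmul_eq_mul, ← mul_assoc,
          mul_one_div_cancel (by positivity), one_mul]
    _ ≤ ∑ k, c k j / N * ((denom c z p k).im / normSq (denom c z p k)) := by
        refine sum_le_sum fun k _ ↦ ?_
        have hD : 0 < normSq (denom c z p k) := normSq_pos.2 (denom_ne_zero hc₀ hz hp k)
        have hDM : normSq (denom c z p k) ≤ M ^ 2 := by
          rw [← Complex.sq_norm]
          exact pow_le_pow_left₀ (norm_nonneg _) (hM k) 2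
        have hzD : z.im ≤ (denom c z p k).im := im_le_im_denom hc₀ hp k
        have := hc k j
        gcongr
        linarith

lemma im_sum_le_mul_im_denom {z : ℂ} {η M : ℝ} (hη : 0 < η) (hηz : η ≤ z.im) (hηM : η ≤ M)
    {p : ι → ℂ} {k : Fin N} (hM : ‖denom c z p k‖ ≤ M) :
    (∑ i, (c k i : ℂ) * p i).im ≤ (1 - η / M) * (denom c z p k).im := by
  have hM₀ : 0 < M := hη.trans_le hηM
  have hdenom : (denom c z p k).im = z.im + (∑ i, (c k i : ℂ) * p i).im := by
    rw [denom, add_im]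
  have hle : η / M * (denom c z p k).im ≤ η := by
    calc η / M * (denom c z p k).im ≤ η / M * M := by
          gcongr
          exact (im_le_norm _).trans hM
      _ = η := div_mul_cancel₀ η hM₀.ne'
  rw [sub_mul, one_mul]
  linarith

lemma norm_map_sub_map_le (hc : ∀ k i, 0 ≤ c k i) {z : ℂ} {η M : ℝ} (hη : 0 < η)
    (hηz : η ≤ z.im) (hηM : η ≤ M) {p q : ι → ℂ} (hp : ∀ i, 0 ≤ (p i).im)
    (hq : ∀ i, 0 ≤ (q i).im) (hMp : ∀ k, ‖denom c z p k‖ ≤ M) (hMq : ∀ k, ‖denom c z q k‖ ≤ M)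
    {m : ℝ} (hm : 0 ≤ m) (hpq : ∀ i, ‖p i - q i‖ ≤ m * √((p i).im * (q i).im)) (j : ι) :
    ‖map c z p j - map c z q j‖ ≤
      (1 - η / M) * m * √((map c z p j).im * (map c z q j).im) := by
  have hz : 0 < z.im := hη.trans_le hηz
  have hθ : 0 ≤ 1 - η / M := sub_nonneg.2 ((div_le_one (hη.trans_le hηM)).2 hηM)
  have him_sum : ∀ {r : ι → ℂ}, (∀ i, 0 ≤ (r i).im) → ∀ k, 0 ≤ (∑ i, (c k i : ℂ) * r i).im :=
    fun hr k ↦ by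
      simpa only [im_sum, im_ofReal_mul] using sum_nonneg fun i _ ↦ mul_nonneg (hc k i) (hr i)
  have him_inv : ∀ {r : ι → ℂ}, (∀ i, 0 ≤ (r i).im) → ∀ k, 0 ≤ (-(denom c z r k)⁻¹).im :=
    fun hr k ↦ by
      rw [im_neg_inv_s16]
      exact div_nonneg (hz.le.trans (im_le_im_denom hc hr k)) (normSq_nonneg _)
  have hdenom : ∀ k, ‖denom c z p k - denom c z q k‖ ≤
      (1 - η / M) * m * √((denom c z p k).im * (denom c z q k).im) := fun k ↦
    norm_add_sub_add_le_mul_sqrt hz (him_sum hp k) (him_sum hq k) hm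
      (im_sum_le_mul_im_denom hη hηz hηM (hMp k)) (im_sum_le_mul_im_denom hη hηz hηM (hMq k))
      (norm_sum_sub_sum_le_mul_sqrt univ (hc k) hp hq hm hpq)
  simp only [map_eq_sum]
  exact norm_sum_sub_sum_le_mul_sqrt univ (fun k ↦ div_nonneg (hc k j) N.cast_nonneg)
    (him_inv hp) (him_inv hq) (mul_nonneg hθ hm) fun k ↦ norm_neg_inv_sub_neg_inv_le_mul_sqrt
      (denom_ne_zero hc hz hp k) (denom_ne_zero hc hz hq k) (hdenom k)

lemma continuousAt_map (hc : ∀ k i, 0 ≤ c k i) {z : ℂ} (hz : 0 < z.im) {p : ι → ℂ}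
    (hp : ∀ i, 0 ≤ (p i).im) : ContinuousAt (map c z) p := by
  refine continuousAt_pi.2 fun j ↦ continuousAt_const.mul (tendsto_finsetSum _ fun k _ ↦ ?_)
  refine continuousAt_const.div ?_ (denom_ne_zero hc hz hp k)
  exact (continuous_const.add (continuous_finsetSum _ fun i _ ↦
    continuous_const.mul (continuous_apply i))).continuousAt

lemma differentiableOn_map (hc : ∀ k i, 0 ≤ c k i) {U : Set ℂ} (hU : ∀ z ∈ U, 0 < z.im)
    {p : ℂ → ι → ℂ} (hp : DifferentiableOn ℂ p U) (hp_im : ∀ z ∈ U, ∀ i, 0 ≤ (p z i).im) :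
    DifferentiableOn ℂ (fun z ↦ map c z (p z)) U := by
  refine differentiableOn_pi.2 fun j ↦ (differentiableOn_const _).mul
    (DifferentiableOn.fun_sum fun k _ ↦ (differentiableOn_const _).div ?_
      fun z hz ↦ denom_ne_zero hc (hU z hz) (hp_im z hz) k)
  have := differentiableOn_pi.1 hp
  unfold denom
  fun_prop

variable (c) in
noncomputable def approx (z : ℂ) (n : ℕ) : ι → ℂ := (map c z)^[n] fun _ ↦ I

lemma approx_succ (z : ℂ) (n : ℕ) : approx c z (n + 1) = map c z (approx c z n) :=
  Function.iterate_succ_apply' _ _ _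

lemma im_approx_nonneg (hc : ∀ k i, 0 ≤ c k i) {z : ℂ} (hz : 0 < z.im) (n : ℕ) (i : ι) :
    0 ≤ (approx c z n i).im := by
  induction n generalizing i with
  | zero => simp [approx]
  | succ n ih => rw [approx_succ]; exact im_map_nonneg hc hz ih i

lemma differentiableOn_approx (hc : ∀ k i, 0 ≤ c k i) (n : ℕ) :
    DifferentiableOn ℂ (fun z ↦ approx c z n) {z | 0 < z.im} := by
  induction n with
  | zero => exact differentiableOn_const _
  | succ n ih =>
    simp only [approx_succ]
    exact differentiableOn_map hc (fun z hz ↦ hz) ih fun z hz ↦ im_approx_nonneg hc hz n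

variable (c) in
noncomputable def normBound (η : ℝ) : ℝ := (∑ k, ∑ i, c k i) / η

variable (c) in
noncomputable def denomBound (η R : ℝ) : ℝ := R + (∑ k, ∑ i, c k i) * normBound c η

section UniformBounds

variable {z : ℂ} {η R : ℝ}

lemma normBound_nonneg (hc : ∀ k i, 0 ≤ c k i) (hη : 0 ≤ η) : 0 ≤ normBound c η :=
  div_nonneg (sum_nonneg fun k _ ↦ sum_nonneg fun i _ ↦ hc k i) hη

lemma le_denomBound (hc : ∀ k i, 0 ≤ c k i) (hη : 0 ≤ η) (hηR : η ≤ R) :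
    η ≤ denomBound c η R :=
  hηR.trans (le_add_of_nonneg_right (mul_nonneg
    (sum_nonneg fun k _ ↦ sum_nonneg fun i _ ↦ hc k i) (normBound_nonneg hc hη)))

lemma norm_approx_succ_le (hc : ∀ k i, 0 ≤ c k i) (hη : 0 < η) (hηz : η ≤ z.im) (n : ℕ)
    (i : ι) : ‖approx c z (n + 1) i‖ ≤ normBound c η := by
  rw [approx_succ]
  exact norm_map_le hc hη hηz (im_approx_nonneg hc (hη.trans_le hηz) n) i

lemma norm_denom_approx_succ_le (hc : ∀ k i, 0 ≤ c k i) (hη : 0 < η) (hηz : η ≤ z.im)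
    (hR : ‖z‖ ≤ R) (n : ℕ) (k : Fin N) :
    ‖denom c z (approx c z (n + 1)) k‖ ≤ denomBound c η R :=
  (norm_denom_le hc z (normBound_nonneg hc hη.le) (norm_approx_succ_le hc hη hηz n) k).trans
    (by rw [denomBound]; linarith)

lemma div_sq_le_im_approx (hN : 0 < N) (hc : ∀ k i, 1 ≤ c k i) (hη : 0 < η) (hηz : η ≤ z.im)
    (hR : ‖z‖ ≤ R) (n : ℕ) (i : ι) : η / denomBound c η R ^ 2 ≤ (approx c z (n + 2) i).im := by
  have hc₀ : ∀ k i, 0 ≤ c k i := fun k i ↦ zero_le_one.trans (hc k i)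
  have hz : 0 < z.im := hη.trans_le hηz
  rw [approx_succ]
  exact (div_le_div_of_nonneg_right hηz (sq_nonneg _)).trans (div_sq_le_im_map hN hc hz
    (im_approx_nonneg hc₀ hz _) (norm_denom_approx_succ_le hc₀ hη hηz hR n) i)

lemma norm_approx_sub_approx_le (hN : 0 < N) (hc : ∀ k i, 1 ≤ c k i) (hη : 0 < η)
    (hηz : η ≤ z.im) (hR : ‖z‖ ≤ R) (n : ℕ) (i : ι) :
    ‖approx c z (n + 2) i - approx c z (n + 3) i‖ ≤
      (1 - η / denomBound c η R) ^ n * (2 * normBound c η / (η / denomBound c η R ^ 2)) *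
        √((approx c z (n + 2) i).im * (approx c z (n + 3) i).im) := by
  have hc₀ : ∀ k i, 0 ≤ c k i := fun k i ↦ zero_le_one.trans (hc k i)
  have hz : 0 < z.im := hη.trans_le hηz
  have hηD : η ≤ denomBound c η R :=
    le_denomBound hc₀ hη.le (hηz.trans ((im_le_norm z).trans hR))
  have hB := normBound_nonneg hc₀ hη.le
  have hθ : 0 ≤ 1 - η / denomBound c η R :=
    sub_nonneg.2 ((div_le_one (hη.trans_le hηD)).2 hηD)
  induction n generalizing i with
  | zero =>
    set ε := η / denomBound c η R ^ 2
    have hε : 0 < ε := by have := hη.trans_le hηD; positivity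
    have hp : ε ≤ (approx c z 2 i).im := div_sq_le_im_approx hN hc hη hηz hR 0 i
    have hq : ε ≤ (approx c z 3 i).im := div_sq_le_im_approx hN hc hη hηz hR 1 i
    have hε_le : ε ≤ √((approx c z 2 i).im * (approx c z 3 i).im) :=
      Real.le_sqrt_of_sq_le (by nlinarith)
    calc ‖approx c z 2 i - approx c z 3 i‖ ≤ ‖approx c z 2 i‖ + ‖approx c z 3 i‖ :=
          norm_sub_le _ _
      _ ≤ 2 * normBound c η := by
          linarith [norm_approx_succ_le hc₀ hη hηz 1 i, norm_approx_succ_le hc₀ hη hηz 2 i]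
      _ = 2 * normBound c η / ε * ε := (div_mul_cancel₀ _ hε.ne').symm
      _ ≤ _ := by
          rw [pow_zero, one_mul]
          gcongr
  | succ n ih =>
    rw [show n + 1 + 2 = n + 2 + 1 from rfl, show n + 1 + 3 = n + 3 + 1 from rfl,
      approx_succ z (n + 2), approx_succ z (n + 3)]
    refine (norm_map_sub_map_le hc₀ hη hηz hηD (im_approx_nonneg hc₀ hz _)
      (im_approx_nonneg hc₀ hz _) (norm_denom_approx_succ_le hc₀ hη hηz hR (n + 1))
      (norm_denom_approx_succ_le hc₀ hη hηz hR (n + 2))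
      (mul_nonneg (pow_nonneg hθ n) (by positivity)) ih i).trans_eq ?_
    ring

lemma exists_dist_approx_le_geometric (hN : 0 < N) (hc : ∀ k i, 1 ≤ c k i) (hη : 0 < η)
    (hηR : η ≤ R) : ∃ C r : ℝ, 0 ≤ r ∧ r < 1 ∧ ∀ z : ℂ, η ≤ z.im → ‖z‖ ≤ R →
      ∀ n, dist (approx c z (n + 2)) (approx c z (n + 1 + 2)) ≤ C * r ^ n := by
  have hc₀ : ∀ k i, 0 ≤ c k i := fun k i ↦ zero_le_one.trans (hc k i)
  have hD : 0 < denomBound c η R := hη.trans_le (le_denomBound hc₀ hη.le hηR)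
  have hB := normBound_nonneg hc₀ hη.le
  have hθ : 0 ≤ 1 - η / denomBound c η R :=
    sub_nonneg.2 ((div_le_one hD).2 (le_denomBound hc₀ hη.le hηR))
  refine ⟨2 * normBound c η / (η / denomBound c η R ^ 2) * normBound c η,
    1 - η / denomBound c η R, hθ, sub_lt_self _ (div_pos hη hD), fun z hηz hR n ↦ ?_⟩
  refine (dist_pi_le_iff (mul_nonneg (by positivity) (pow_nonneg hθ n))).2 fun i ↦ ?_
  have hsqrt : √((approx c z (n + 2) i).im * (approx c z (n + 3) i).im) ≤ normBound c η := by
    refine (Real.sqrt_le_sqrt (mul_le_mul ?_ ?_ ?_ hB)).trans_eq (Real.sqrt_mul_self hB)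
    · exact (im_le_norm _).trans (norm_approx_succ_le hc₀ hη hηz (n + 1) i)
    · exact (im_le_norm _).trans (norm_approx_succ_le hc₀ hη hηz (n + 2) i)
    · exact im_approx_nonneg hc₀ (hη.trans_le hηz) _ i
  rw [dist_eq_norm]
  calc _ ≤ (1 - η / denomBound c η R) ^ n * (2 * normBound c η / (η / denomBound c η R ^ 2)) *
        normBound c η := by
        refine (norm_approx_sub_approx_le hN hc hη hηz hR n i).trans ?_
        gcongr
    _ = _ := by ring

end UniformBounds

theorem exists_differentiableOn_map_eq (hN : 0 < N) (hc : ∀ k i, 1 ≤ c k i) :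
    ∃ L : ℂ → ι → ℂ, DifferentiableOn ℂ L {z | 0 < z.im} ∧
      ∀ z : ℂ, 0 < z.im → (∀ i, 0 < (L z i).im) ∧ map c z (L z) = L z := by
  have hc₀ : ∀ k i, 0 ≤ c k i := fun k i ↦ zero_le_one.trans (hc k i)
  have hU : IsOpen {z : ℂ | 0 < z.im} := isOpen_lt continuous_const continuous_im
  -- From the second iterate on, the imaginary parts are bounded below uniformly.
  obtain ⟨L, hL, hlim⟩ := exists_differentiableOn_tendsto_of_dist_le_geometric hU
    (f := fun n z ↦ approx c z (n + 2)) (fun n ↦ differentiableOn_approx hc₀ (n + 2))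
    fun z₀ (hz₀ : 0 < z₀.im) ↦ by
      obtain ⟨C, r, hr₀, hr, hgeom⟩ := exists_dist_approx_le_geometric hN hc (half_pos hz₀)
        (R := ‖z₀‖ + 1) (by linarith [im_le_norm z₀])
      have hnhds : {z : ℂ | z₀.im / 2 < z.im} ∈ 𝓝 z₀ :=
        (isOpen_lt continuous_const continuous_im).mem_nhds (half_lt_self hz₀)
      exact ⟨_, inter_mem hnhds (Metric.closedBall_mem_nhds z₀ one_pos), C, r, hr₀, hr,
        fun n z hz ↦ hgeom z hz.1.le (norm_le_of_mem_closedBall hz.2) n⟩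
  refine ⟨L, hL, fun z hz ↦ ?_⟩
  have hε : 0 < z.im / denomBound c z.im ‖z‖ ^ 2 :=
    div_pos hz (pow_pos (hz.trans_le (le_denomBound hc₀ hz.le (im_le_norm z))) 2)
  have hpos : ∀ i, 0 < (L z i).im := fun i ↦ hε.trans_le <| ge_of_tendsto'
    ((continuous_im.tendsto _).comp (((continuous_apply i).tendsto _).comp (hlim z hz)))
    fun n ↦ div_sq_le_im_approx hN hc hz le_rfl le_rfl n i
  refine ⟨hpos, tendsto_nhds_unique ?_ ((hlim z hz).comp (tendsto_add_atTop_nat 1))⟩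
  exact ((continuousAt_map hc₀ hz fun i ↦ (hpos i).le).tendsto.comp (hlim z hz)).congr
    fun n ↦ (approx_succ z (n + 2)).symm

end VectorDyson

/-- the solution map `z ↦ (u(z), v(z))` of the self-consistent system is
holomorphic on the upper half-plane. -/
theorem stmt_16 (N : ℕ) (hN : 1 ≤ N)
    (α β : Fin N → ℝ) (hα : ∀ k, 1 ≤ α k) (hβ : ∀ k, 1 ≤ β k) :
    ∃ u v : ℂ → ℂ,
      DifferentiableOn ℂ u {z : ℂ | 0 < z.im} ∧
      DifferentiableOn ℂ v {z : ℂ | 0 < z.im} ∧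
      ∀ z : ℂ, 0 < z.im →
        0 < (u z).im ∧ 0 < (v z).im ∧
        u z = -(1 / N) * ∑ k, (α k : ℂ) / (z + α k * u z + β k * v z) ∧
        v z = -(1 / N) * ∑ k, (β k : ℂ) / (z + α k * u z + β k * v z) := by
  obtain ⟨L, hL, hsol⟩ := VectorDyson.exists_differentiableOn_map_eq
    (c := fun k ↦ ![α k, β k]) hN (fun k i ↦ by fin_cases i <;> simp [hα, hβ])
  refine ⟨fun z ↦ L z 0, fun z ↦ L z 1, differentiableOn_pi.1 hL 0, differentiableOn_pi.1 hL 1,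
    fun z hz ↦ ?_⟩
  obtain ⟨hpos, hfix⟩ := hsol z hz
  refine ⟨hpos 0, hpos 1, ?_, ?_⟩
  all_goals
    dsimp only
    conv_lhs => rw [← hfix]
    simp [VectorDyson.map, VectorDyson.denom, Fin.sum_univ_two, add_assoc]
end
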